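/- arXiv:2602.11439 — 9 statements merged into one kernel-verified Lean document; each statement's English description precedes it below -/
import Mathlib

section
/- Let β, γ ∈ (0,1), c⁺ > 0 and c⁻ ≥ 0 satisfy (1−βγ)·c⁺ > c⁻. Let W : [0,∞) → ℝ be nondecreasing, let d ≥ 0, and let a be a real number with a ≥ (1−βγ)·c⁺ − c⁻. Then the function x ↦ a·x + β·W(γ·x + d) is strictly increasing on [0,∞). Consequently, if Φ is a pointwise minimum of finitely many functions of this form, then Φ is strictly increasing on [0,∞) and, for every x ≥ 0, the infimum of Φ over [x,∞) is attained uniquely at x (so the agent's optimal improvement action is zero). -/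
/-!
The hypothesis `(1 - βγ)c⁺ > c⁻` makes every linear coefficient `a` positive, so each branch is a
strictly increasing linear term plus the nondecreasing term `β·W(γx + d)`. A finite minimum of
strictly increasing functions is strictly increasing, and a strictly increasing function attains
its infimum over `[x, ∞)` only at `x`.
-/

open Set

theorem strictMonoOn_mul_add_mul_comp_affine {a β γ d : ℝ} (ha : 0 < a) (hβ : 0 ≤ β)
    (hγ : 0 ≤ γ) (hd : 0 ≤ d) {W : ℝ → ℝ} (hW : MonotoneOn W (Ici 0)) :
    StrictMonoOn (fun x => a * x + β * W (γ * x + d)) (Ici 0) := by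
  have hshift : MonotoneOn (fun x => γ * x + d) (Ici 0) :=
    fun _ _ _ _ hxy => add_le_add_left (mul_le_mul_of_nonneg_left hxy hγ) d
  have hmaps : MapsTo (fun x => γ * x + d) (Ici 0) (Ici 0) :=
    fun x hx => add_nonneg (mul_nonneg hγ hx) hd
  exact (strictMono_mul_left_of_pos ha).strictMonoOn _ |>.add_monotone <|
    (monotone_mul_left_of_nonneg hβ).comp_monotoneOn (hW.comp hshift hmaps)

theorem StrictMonoOn.finset_inf' {ι α β : Type*} [Preorder α] [LinearOrder β] {t : Set α}
    {s : Finset ι} (hs : s.Nonempty) {f : ι → α → β} (hf : ∀ i ∈ s, StrictMonoOn (f i) t) :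
    StrictMonoOn (fun x => s.inf' hs (f · x)) t := by
  intro x hx y hy hxy
  obtain ⟨j, hj, hjy⟩ := s.exists_mem_eq_inf' hs (f · y)
  calc s.inf' hs (f · x) ≤ f j x := s.inf'_le _ hj
    _ < f j y := hf j hj hx hy hxy
    _ = s.inf' hs (f · y) := hjy.symm

theorem stmt_0_general (β γ cplus cminus : ℝ)
    (hβ : β ∈ Ioo (0:ℝ) 1) (hγ : γ ∈ Ioo (0:ℝ) 1)
    (himp : (1 - β * γ) * cplus > cminus) :
    (∀ (W : ℝ → ℝ), MonotoneOn W (Ici 0) → ∀ d : ℝ, 0 ≤ d →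
      ∀ a : ℝ, (1 - β * γ) * cplus - cminus ≤ a →
      StrictMonoOn (fun x => a * x + β * W (γ * x + d)) (Ici 0))
    ∧
    (∀ (ι : Type) (s : Finset ι) (hs : s.Nonempty)
        (A D : ι → ℝ) (Wf : ι → ℝ → ℝ),
      (∀ i ∈ s, (1 - β * γ) * cplus - cminus ≤ A i) →
      (∀ i ∈ s, 0 ≤ D i) →
      (∀ i ∈ s, MonotoneOn (Wf i) (Ici 0)) →
      (StrictMonoOn (fun x => s.inf' hs (fun i => A i * x + β * Wf i (γ * x + D i))) (Ici 0)
       ∧ ∀ x : ℝ, 0 ≤ x →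
          (IsLeast ((fun y => s.inf' hs (fun i => A i * y + β * Wf i (γ * y + D i))) '' Ici x)
            (s.inf' hs (fun i => A i * x + β * Wf i (γ * x + D i)))
          ∧ ∀ y ∈ Ici x,
              s.inf' hs (fun i => A i * y + β * Wf i (γ * y + D i)) =
                s.inf' hs (fun i => A i * x + β * Wf i (γ * x + D i)) → y = x))) := by
  have branch : ∀ W : ℝ → ℝ, MonotoneOn W (Ici 0) → ∀ d : ℝ, 0 ≤ d →
      ∀ a : ℝ, (1 - β * γ) * cplus - cminus ≤ a →
      StrictMonoOn (fun x => a * x + β * W (γ * x + d)) (Ici 0) := fun W hW d hd a ha =>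
    strictMonoOn_mul_add_mul_comp_affine ((sub_pos.2 himp).trans_le ha) hβ.1.le hγ.1.le hd hW
  refine ⟨branch, fun ι s hs A D Wf hA hD hW => ?_⟩
  have hΦ := StrictMonoOn.finset_inf' hs fun i hi =>
    branch (Wf i) (hW i hi) (D i) (hD i hi) (A i) (hA i hi)
  refine ⟨hΦ, fun x hx => ⟨?_, fun y hy heq => hΦ.injOn (hx.trans hy) hx heq⟩⟩
  exact (hΦ.monotoneOn.mono (Ici_subset_Ici.2 hx)).map_isLeast isLeast_Ici

/-- Proposition 2.1 (impossibility region): if `(1 - βγ)c⁺ > c⁻`, every Bellman branch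
`x ↦ a·x + β·W(γx + d)` with `a ≥ (1-βγ)c⁺ - c⁻`, `d ≥ 0`, and `W` nondecreasing on `[0,∞)`
is strictly increasing on `[0,∞)`; hence any pointwise minimum `Φ` of finitely many such
branches is strictly increasing on `[0,∞)` and, for every `x ≥ 0`, the infimum of `Φ` over
`[x,∞)` is attained uniquely at `x` (the optimal improvement action is zero). -/
theorem stmt_0 (β γ cplus cminus : ℝ)
    (hβ : β ∈ Ioo (0:ℝ) 1) (hγ : γ ∈ Ioo (0:ℝ) 1)
    (hcp : 0 < cplus) (hcm : 0 ≤ cminus)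
    (himp : (1 - β * γ) * cplus > cminus) :
    (∀ (W : ℝ → ℝ), MonotoneOn W (Ici 0) → ∀ d : ℝ, 0 ≤ d →
      ∀ a : ℝ, (1 - β * γ) * cplus - cminus ≤ a →
      StrictMonoOn (fun x => a * x + β * W (γ * x + d)) (Ici 0))
    ∧
    (∀ (ι : Type) (s : Finset ι) (hs : s.Nonempty)
        (A D : ι → ℝ) (Wf : ι → ℝ → ℝ),
      (∀ i ∈ s, (1 - β * γ) * cplus - cminus ≤ A i) →
      (∀ i ∈ s, 0 ≤ D i) →
      (∀ i ∈ s, MonotoneOn (Wf i) (Ici 0)) →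
      (StrictMonoOn (fun x => s.inf' hs (fun i => A i * x + β * Wf i (γ * x + D i))) (Ici 0)
       ∧ ∀ x : ℝ, 0 ≤ x →
          (IsLeast ((fun y => s.inf' hs (fun i => A i * y + β * Wf i (γ * y + D i))) '' Ici x)
            (s.inf' hs (fun i => A i * x + β * Wf i (γ * x + D i)))
          ∧ ∀ y ∈ Ici x,
              s.inf' hs (fun i => A i * y + β * Wf i (γ * y + D i)) =
                s.inf' hs (fun i => A i * x + β * Wf i (γ * x + D i)) → y = x))) :=
  stmt_0_general β γ cplus cminus hβ hγ himp
end

section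
/- Let β ∈ (0,1), c⁺ > 0, c⁻ > 0 and H ≥ 0 satisfy (1−βH)·c⁺ > c⁻. Let g : [0,∞) → [0,∞) be H-Lipschitz, and let V : [0,∞) → ℝ be nonincreasing and such that x ↦ V(x) + c⁺·x is nondecreasing. Then the function x ↦ (c⁺ − c⁻)·x + β·V(g(x)) is strictly increasing on [0,∞), and for every x ≥ 0 its infimum over [x,∞) is attained uniquely at x. -/
open Set

/-- Proposition 6.1 (impossibility region for general attribute dynamics): if
`(1 - βH)c⁺ > c⁻`, `g : [0,∞) → [0,∞)` is `H`-Lipschitz, `V` is nonincreasing with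
`x ↦ V(x) + c⁺x` nondecreasing, then `x ↦ (c⁺ - c⁻)x + β·V(g(x))` is strictly increasing
on `[0,∞)` and for every `x ≥ 0` its infimum over `[x,∞)` is attained uniquely at `x`. -/
theorem stmt_1 (β cplus cminus H : ℝ)
    (hβ : β ∈ Ioo (0:ℝ) 1) (hcp : 0 < cplus) (hcm : 0 < cminus) (hH : 0 ≤ H)
    (himp : (1 - β * H) * cplus > cminus)
    (g : ℝ → ℝ) (hg_nonneg : ∀ x, 0 ≤ x → 0 ≤ g x)
    (hg_lip : ∀ x, 0 ≤ x → ∀ y, 0 ≤ y → |g x - g y| ≤ H * |x - y|)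
    (V : ℝ → ℝ) (hV_anti : AntitoneOn V (Ici 0))
    (hV_slope : MonotoneOn (fun x => V x + cplus * x) (Ici 0)) :
    StrictMonoOn (fun x => (cplus - cminus) * x + β * V (g x)) (Ici 0)
    ∧ ∀ x : ℝ, 0 ≤ x →
        (IsLeast ((fun y => (cplus - cminus) * y + β * V (g y)) '' Ici x)
            ((cplus - cminus) * x + β * V (g x))
        ∧ ∀ y ∈ Ici x,
            (cplus - cminus) * y + β * V (g y) = (cplus - cminus) * x + β * V (g x) → y = x) := by
  obtain ⟨hβ0, hβ1⟩ := hβ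
  -- key Lipschitz-type bound for V : |V a - V b| ≤ cplus * |a - b| on [0,∞)
  have hVlip : ∀ a, 0 ≤ a → ∀ b, 0 ≤ b → |V a - V b| ≤ cplus * |a - b| := by
    intro a ha b hb
    wlog hab : a ≤ b generalizing a b
    · rw [abs_sub_comm, abs_sub_comm a b]; exact this b hb a ha (le_of_not_ge hab)
    have h1 : V b ≤ V a := hV_anti ha hb hab
    have h2 : V a + cplus * a ≤ V b + cplus * b := hV_slope ha hb hab
    rw [abs_of_nonneg (by linarith), abs_of_nonpos (by linarith)]
    linarith
  have key : StrictMonoOn (fun x => (cplus - cminus) * x + β * V (g x)) (Ici 0) := by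
    intro x hx y hy hxy
    simp only [mem_Ici] at hx hy
    have hgd : |g x - g y| ≤ H * (y - x) := by
      refine (hg_lip x hx y hy).trans (le_of_eq ?_)
      rw [abs_of_nonpos (by linarith : x - y ≤ 0)]; ring
    have hVd : |V (g x) - V (g y)| ≤ cplus * (H * (y - x)) := by
      calc |V (g x) - V (g y)| ≤ cplus * |g x - g y| :=
            hVlip (g x) (hg_nonneg x hx) (g y) (hg_nonneg y hy)
        _ ≤ cplus * (H * (y - x)) := by
            exact mul_le_mul_of_nonneg_left hgd hcp.le
    have habs := abs_le.1 hVd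
    have hβm : β * (V (g x) - V (g y)) ≤ β * (cplus * (H * (y - x))) :=
      mul_le_mul_of_nonneg_left habs.2 hβ0.le
    simp only
    nlinarith [mul_pos (sub_pos.2 himp) (sub_pos.2 hxy)]
  refine ⟨key, fun x hx => ?_⟩
  refine ⟨⟨⟨x, le_refl x, rfl⟩, ?_⟩, ?_⟩
  · rintro v ⟨y, hy, rfl⟩
    rcases eq_or_lt_of_le (mem_Ici.1 hy) with h | h
    · subst h; exact le_refl _
    · exact (key hx (le_trans hx hy) h).le
  · intro y hy heq
    by_contra hne
    have hlt : x < y := lt_of_le_of_ne hy (Ne.symm hne)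
    have := key hx (le_trans hx hy) hlt
    simp only at this
    linarith
end

section
/- Assume μ < δ/(1−γ), r ≥ (1−β)·c⁻·δ / ((1−γ)(1−βγ)), c⁻ ≥ βγ·c⁺ and c⁻ > (1−βγ)·c⁺. Define s₀ = μ, ξ₀ = c⁺·μ − r/(1−β), and recursively s_k = (s_{k−1} − δ)/γ and ξ_k = (c⁺ − ((1−β^k γ^k)/(1−βγ))·c⁻)·(s_k − s_{k−1}) + ξ_{k−1} for k = 1,…,K−1. Then the function W : [0,∞) → ℝ given by W(x) = ξ_{K−1}·𝟙{x < s_{K−1}} + Σ_{k=1}^{K−1} [ (c⁺ − ((1−β^k γ^k)/(1−βγ))·c⁻)·(x − s_k) + ξ_k ]·𝟙{s_k ≤ x < s_{k−1}} + [ c⁺·(x − s₀) + ξ₀ ]·𝟙{x ≥ s₀} satisfies the two-level Bellman fixed-point equation at every x ≥ 0. -/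
/-!
`W` is continuous and piecewise affine: constant `ξ_{K-1}` below `s_{K-1}`, of slope
`a_k = c⁺ - (1 - (βγ)^k)/(1 - βγ) c⁻` on `[s_k, s_{k-1}]` and of slope `c⁺` above `s_0 = μ`.
The slopes satisfy `a_{k+1} = (1 - βγ)c⁺ - c⁻ + βγ a_k` and are positive exactly for `k < K`,
so `W` is nondecreasing and has slope at most `c⁺ - c⁻` below `μ`.

For a fixed effort `x̃` the best gaming is either `u = max (μ - x̃) 0` (reaching the threshold)
or `u = 0` (not reaching it). Not reaching never beats `W x`: `W ≤ 0` below `μ`, and the slope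
bound gives `W x̃ - W (γ x̃) ≤ (c⁺ - c⁻)(1 - γ) x̃`. Reaching from `x̃ ≥ s_{K-1}` costs exactly
`W x̃`, because `y ↦ γ y + δ` maps `[s_{k+1}, s_k]` onto `[s_k, s_{k-1}]` and the two recursions
make the resulting affine expressions agree; reaching from `x̃ < s_{K-1}` costs at least
`ξ_{K-1}` because `a_K ≤ 0`. Hence the infimum is attained at `x̃ = max x s_{K-1}`.
-/

/-- `K := ⌈ log(1 - (1-βγ)c⁺/c⁻) / log(βγ) ⌉` (logarithm base `βγ`, rounded up). -/
noncomputable def bellK (β γ cplus cminus : ℝ) : ℕ :=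
  ⌈Real.log (1 - (1 - β * γ) * cplus / cminus) / Real.log (β * γ)⌉₊

/-- The objective of the two-level Bellman equation at post-effort attribute `xt`
and gaming action `u`. -/
noncomputable def bellObj (β γ cplus cminus r δ μ : ℝ) (W : ℝ → ℝ) (xt u : ℝ) : ℝ :=
  (1 - β * γ) * cplus * xt + cminus * u
    - (r + β * cplus * δ) * (if μ ≤ xt + u then 1 else 0)
    + β * W (γ * xt + δ * (if μ ≤ xt + u then 1 else 0))

/-- Right-hand side of the two-level Bellman fixed-point equation:
infimum over `x̃ ≥ x` and `u ≥ 0` of the Bellman objective. -/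
noncomputable def bellRHS (β γ cplus cminus r δ μ : ℝ) (W : ℝ → ℝ) (x : ℝ) : ℝ :=
  sInf { v : ℝ | ∃ xt u : ℝ, x ≤ xt ∧ 0 ≤ u ∧ v = bellObj β γ cplus cminus r δ μ W xt u }

open Set

theorem exists_mem_Ico_succ {α : Type*} [LinearOrder α] {s : ℕ → α} {y : α} {n : ℕ}
    (h0 : y < s 0) (hn : s n ≤ y) :
    ∃ k < n, y ∈ Ico (s (k + 1)) (s k) := by
  induction n with
  | zero => exact absurd hn h0.not_ge
  | succ n ih =>
    rcases le_or_gt (s n) y with h | h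
    · obtain ⟨k, hk, hky⟩ := ih h
      exact ⟨k, hk.trans n.lt_succ_self, hky⟩
    · exact ⟨n, n.lt_succ_self, hn, h⟩

theorem Antitone.eq_of_mem_Ico_pred {α : Type*} [Preorder α] {s : ℕ → α} (hs : Antitone s)
    {y : α} {j k : ℕ} (hj : y ∈ Ico (s j) (s (j - 1))) (hk : y ∈ Ico (s k) (s (k - 1))) :
    j = k := by
  by_contra hne
  rcases Nat.lt_or_gt_of_ne hne with h | h
  · exact (hs (show j ≤ k - 1 by omega)).not_gt (hj.1.trans_lt hk.2)
  · exact (hs (show k ≤ j - 1 by omega)).not_gt (hk.1.trans_lt hj.2)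

theorem monotoneOn_Icc_of_forall_Icc_succ {α β : Type*} [LinearOrder α] [Preorder β]
    {f : α → β} {s : ℕ → α} (hs : Antitone s) {n : ℕ}
    (h : ∀ k < n, MonotoneOn f (Icc (s (k + 1)) (s k))) : MonotoneOn f (Icc (s n) (s 0)) := by
  induction n with
  | zero => simp
  | succ n ih =>
    rw [← Icc_union_Icc_eq_Icc (hs n.le_succ) (hs n.zero_le)]
    exact (h n n.lt_succ_self).union_right (ih fun k hk => h k (hk.trans n.lt_succ_self))
      (isGreatest_Icc (hs n.le_succ)) (isLeast_Icc (hs n.zero_le))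

theorem monotoneOn_of_eq_affine {f : ℝ → ℝ} {S : Set ℝ} {c p d : ℝ} (hc : 0 ≤ c)
    (hf : ∀ y ∈ S, f y = c * (y - p) + d) : MonotoneOn f S := fun x hx y hy hxy => by
  rw [hf x hx, hf y hy]
  gcongr

-- `s` is a backward orbit of the contraction `y ↦ γ y + δ` started below its fixed point
-- `δ / (1 - γ)`, so it moves away from that point, downwards.
theorem strictAnti_of_mul_succ_add {γ δ : ℝ} {s : ℕ → ℝ} (hγ0 : 0 < γ) (hγ1 : γ < 1)
    (hstep : ∀ k, γ * s (k + 1) + δ = s k) (h0 : s 0 < δ / (1 - γ)) : StrictAnti s := by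
  set p := δ / (1 - γ)
  have hp : γ * p + δ = p := by
    have : 1 - γ ≠ 0 := by linarith
    simp only [p]
    field_simp
    ring
  have hlt : ∀ k, s k < p := by
    intro k
    induction k with
    | zero => exact h0
    | succ k ih =>
      by_contra! h
      nlinarith [mul_nonneg hγ0.le (sub_nonneg.2 h), hstep k]
  exact strictAnti_nat_of_succ_lt fun k => by
    nlinarith [mul_pos (sub_pos.2 hγ1) (sub_pos.2 (hlt (k + 1))), hstep k]

noncomputable def bellW (c : ℝ) (a s ξ : ℕ → ℝ) (n : ℕ) (x : ℝ) : ℝ :=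
  (if x < s n then ξ n else 0)
    + ∑ k ∈ Finset.Icc 1 n, (if s k ≤ x ∧ x < s (k - 1) then a k * (x - s k) + ξ k else 0)
    + (if s 0 ≤ x then c * (x - s 0) + ξ 0 else 0)

section bellW

variable {c : ℝ} {a s ξ : ℕ → ℝ} {n : ℕ} {y : ℝ}

theorem bellW_of_lt (hs : Antitone s) (hy : y < s n) : bellW c a s ξ n y = ξ n := by
  have hsum : ∑ k ∈ Finset.Icc 1 n,
      (if s k ≤ y ∧ y < s (k - 1) then a k * (y - s k) + ξ k else 0) = 0 :=
    Finset.sum_eq_zero fun k hk =>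
      if_neg fun h => (hs (Finset.mem_Icc.1 hk).2).not_gt (h.1.trans_lt hy)
  rw [bellW, if_pos hy, hsum, if_neg (hy.trans_le (hs n.zero_le)).not_ge]
  ring

theorem bellW_of_ge (hs : Antitone s) (hy : s 0 ≤ y) :
    bellW c a s ξ n y = c * (y - s 0) + ξ 0 := by
  have hsum : ∑ k ∈ Finset.Icc 1 n,
      (if s k ≤ y ∧ y < s (k - 1) then a k * (y - s k) + ξ k else 0) = 0 :=
    Finset.sum_eq_zero fun k _ => if_neg fun h => (hs (k - 1).zero_le).not_gt (hy.trans_lt h.2)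
  rw [bellW, if_neg ((hs n.zero_le).trans hy).not_gt, hsum, if_pos hy]
  ring

theorem bellW_of_mem_Ico (hs : Antitone s) {k : ℕ} (hk : k ∈ Finset.Icc 1 n)
    (hy : y ∈ Ico (s k) (s (k - 1))) : bellW c a s ξ n y = a k * (y - s k) + ξ k := by
  have hsum : ∑ j ∈ Finset.Icc 1 n,
      (if s j ≤ y ∧ y < s (j - 1) then a j * (y - s j) + ξ j else 0) = a k * (y - s k) + ξ k := by
    refine (Finset.sum_eq_single_of_mem k hk fun j _ hjk => ?_).trans (if_pos hy)
    exact if_neg fun hj => hjk (hs.eq_of_mem_Ico_pred hj hy)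
  rw [bellW, hsum, if_neg ((hs (Finset.mem_Icc.1 hk).2).trans hy.1).not_gt,
    if_neg (hy.2.trans_le (hs (k - 1).zero_le)).not_ge]
  ring

theorem bellW_apply_s (hs : StrictAnti s) {k : ℕ} (hk : k ≤ n) :
    bellW c a s ξ n (s k) = ξ k := by
  cases k with
  | zero => simp [bellW_of_ge hs.antitone le_rfl]
  | succ k =>
    rw [bellW_of_mem_Ico hs.antitone (Finset.mem_Icc.2 ⟨k.succ_pos, hk⟩)
      ⟨le_rfl, hs k.lt_succ_self⟩]
    ring

theorem bellW_of_le (hs : StrictAnti s) (hy : y ≤ s n) : bellW c a s ξ n y = ξ n := by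
  rcases hy.lt_or_eq with hy | rfl
  · exact bellW_of_lt hs.antitone hy
  · exact bellW_apply_s hs le_rfl

theorem bellW_of_mem_Icc (hs : StrictAnti s)
    (hξ : ∀ k, ξ (k + 1) = a (k + 1) * (s (k + 1) - s k) + ξ k) {k : ℕ} (hk : k < n)
    (hy : y ∈ Icc (s (k + 1)) (s k)) :
    bellW c a s ξ n y = a (k + 1) * (y - s (k + 1)) + ξ (k + 1) := by
  rcases hy.2.lt_or_eq with hlt | rfl
  · exact bellW_of_mem_Ico hs.antitone (Finset.mem_Icc.2 ⟨k.succ_pos, hk⟩) ⟨hy.1, hlt⟩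
  · rw [bellW_apply_s hs hk.le, hξ k]
    ring

theorem monotone_bellW (hs : StrictAnti s)
    (hξ : ∀ k, ξ (k + 1) = a (k + 1) * (s (k + 1) - s k) + ξ k) (hc : 0 ≤ c)
    (ha : ∀ k < n, 0 ≤ a (k + 1)) : Monotone (bellW c a s ξ n) := by
  have hlow : MonotoneOn (bellW c a s ξ n) (Iic (s n)) := fun x hx y hy _ => by
    rw [bellW_of_le hs hx, bellW_of_le hs hy]
  have hmid : MonotoneOn (bellW c a s ξ n) (Icc (s n) (s 0)) :=
    monotoneOn_Icc_of_forall_Icc_succ hs.antitone fun k hk =>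
      monotoneOn_of_eq_affine (ha k hk) fun y hy => bellW_of_mem_Icc hs hξ hk hy
  have htop : MonotoneOn (bellW c a s ξ n) (Ici (s 0)) :=
    monotoneOn_of_eq_affine hc fun y hy => bellW_of_ge hs.antitone hy
  have hsn : s n ≤ s 0 := hs.antitone n.zero_le
  refine MonotoneOn.Iic_union_Ici ?_ htop
  rw [← Iic_union_Icc_eq_Iic hsn]
  exact hlow.union_right hmid isGreatest_Iic (isLeast_Icc hsn)

theorem monotoneOn_sub_bellW (hs : StrictAnti s)
    (hξ : ∀ k, ξ (k + 1) = a (k + 1) * (s (k + 1) - s k) + ξ k) {L : ℝ} (hL : 0 ≤ L)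
    (ha : ∀ k < n, a (k + 1) ≤ L) :
    MonotoneOn (fun y => L * y - bellW c a s ξ n y) (Iic (s 0)) := by
  have hlow : MonotoneOn (fun y => L * y - bellW c a s ξ n y) (Iic (s n)) :=
    monotoneOn_of_eq_affine (p := s n) (d := L * s n - ξ n) hL fun y hy => by
      rw [bellW_of_le hs hy]
      ring
  have hmid : MonotoneOn (fun y => L * y - bellW c a s ξ n y) (Icc (s n) (s 0)) :=
    monotoneOn_Icc_of_forall_Icc_succ hs.antitone fun k hk =>
      monotoneOn_of_eq_affine (p := s (k + 1)) (d := L * s (k + 1) - ξ (k + 1))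
        (sub_nonneg.2 (ha k hk)) fun y hy => by
          rw [bellW_of_mem_Icc hs hξ hk hy]
          ring
  have hsn : s n ≤ s 0 := hs.antitone n.zero_le
  rw [← Iic_union_Icc_eq_Iic hsn]
  exact hlow.union_right hmid isGreatest_Iic (isLeast_Icc hsn)

theorem bellW_mul_add_of_mem_Ico {γ δ t : ℝ} {k : ℕ} (hs : StrictAnti s)
    (hξ : ∀ k, ξ (k + 1) = a (k + 1) * (s (k + 1) - s k) + ξ k)
    (hstep : ∀ k, γ * s (k + 1) + δ = s k) (hγ : 0 ≤ γ) (ha0 : a 0 = c) (hk : k ≤ n)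
    (ht : t ∈ Ico (s (k + 1)) (s k)) :
    bellW c a s ξ n (γ * t + δ) = a k * (γ * t + δ - s k) + ξ k := by
  have hlow : s k ≤ γ * t + δ := by
    rw [← hstep k]
    gcongr
    exact ht.1
  cases k with
  | zero => rw [bellW_of_ge hs.antitone hlow, ha0]
  | succ k =>
    have hup : γ * t + δ ≤ s k := by
      rw [← hstep k]
      gcongr
      exact ht.2.le
    exact bellW_of_mem_Icc hs hξ hk ⟨hlow, hup⟩

end bellW

noncomputable def bellSlope (β γ cplus cminus : ℝ) (k : ℕ) : ℝ :=
  cplus - (1 - (β * γ) ^ k) / (1 - β * γ) * cminus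

section bellSlope

variable {β γ cplus cminus : ℝ}

theorem bellSlope_zero : bellSlope β γ cplus cminus 0 = cplus := by
  simp [bellSlope]

theorem bellSlope_succ (hq : β * γ ≠ 1) (k : ℕ) :
    bellSlope β γ cplus cminus (k + 1)
      = (1 - β * γ) * cplus - cminus + β * γ * bellSlope β γ cplus cminus k := by
  have : 1 - β * γ ≠ 0 := sub_ne_zero.2 hq.symm
  simp only [bellSlope]
  field_simp
  ring

theorem bellSlope_one (hq : β * γ ≠ 1) : bellSlope β γ cplus cminus 1 = cplus - cminus := by
  rw [bellSlope_succ hq, bellSlope_zero]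
  ring

theorem bellSlope_sub_succ (hq : β * γ ≠ 1) (k : ℕ) :
    bellSlope β γ cplus cminus k - bellSlope β γ cplus cminus (k + 1)
      = (β * γ) ^ k * cminus := by
  have : 1 - β * γ ≠ 0 := sub_ne_zero.2 hq.symm
  simp only [bellSlope]
  field_simp
  ring

theorem bellSlope_antitone (hq0 : 0 ≤ β * γ) (hq : β * γ ≠ 1) (hcm : 0 ≤ cminus) :
    Antitone (bellSlope β γ cplus cminus) :=
  antitone_nat_of_succ_le fun k => sub_nonneg.1 <| by
    rw [bellSlope_sub_succ hq]
    positivity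

theorem bellSlope_pos_iff (hβ0 : 0 < β) (hβ1 : β < 1) (hγ0 : 0 < γ) (hγ1 : γ < 1)
    (hcm : 0 < cminus) (hcp : 0 < cplus) (hcm2 : (1 - β * γ) * cplus < cminus) {k : ℕ} :
    0 < bellSlope β γ cplus cminus k ↔ k < bellK β γ cplus cminus := by
  have hq0 : 0 < β * γ := mul_pos hβ0 hγ0
  have hq1 : β * γ < 1 := by nlinarith
  set A := 1 - (1 - β * γ) * cplus / cminus with hA
  have hA0 : 0 < A := by rw [hA, sub_pos, div_lt_one hcm]; exact hcm2
  have hA1 : A < 1 := by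
    have : 0 < (1 - β * γ) * cplus / cminus := by positivity
    linarith
  have hslope : bellSlope β γ cplus cminus k = cminus / (1 - β * γ) * ((β * γ) ^ k - A) := by
    have : 1 - β * γ ≠ 0 := by linarith
    simp only [bellSlope, hA]
    field_simp
    ring
  have hcoef : 0 < cminus / (1 - β * γ) := div_pos hcm (by linarith)
  rw [hslope, mul_pos_iff_of_pos_left hcoef, sub_pos, bellK, Nat.lt_ceil,
    lt_div_iff_of_neg (Real.log_neg hq0 hq1), ← Real.log_pow,
    Real.log_lt_log_iff hA0 (pow_pos hq0 k)]

end bellSlope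

noncomputable def reachCost (β γ cplus cminus r δ μ : ℝ) (W : ℝ → ℝ) (t : ℝ) : ℝ :=
  (1 - β * γ) * cplus * t + cminus * max (μ - t) 0 - (r + β * cplus * δ) + β * W (γ * t + δ)

noncomputable def idleCost (β γ cplus : ℝ) (W : ℝ → ℝ) (t : ℝ) : ℝ :=
  (1 - β * γ) * cplus * t + β * W (γ * t)

section Bellman

variable {β γ cplus cminus r δ μ : ℝ} {W : ℝ → ℝ}

theorem bellObj_max_sub_zero (t : ℝ) :
    bellObj β γ cplus cminus r δ μ W t (max (μ - t) 0)
      = reachCost β γ cplus cminus r δ μ W t := by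
  rw [bellObj, if_pos (by linarith [le_max_left (μ - t) 0]), reachCost]
  ring_nf

theorem reachCost_le_bellObj (hcm : 0 ≤ cminus) {t u : ℝ} (hu : 0 ≤ u) (h : μ ≤ t + u) :
    reachCost β γ cplus cminus r δ μ W t ≤ bellObj β γ cplus cminus r δ μ W t u := by
  rw [bellObj, if_pos h, reachCost, mul_one, mul_one]
  gcongr
  exact max_le (by linarith) hu

theorem bellObj_of_lt {t u : ℝ} (h : t + u < μ) :
    bellObj β γ cplus cminus r δ μ W t u = idleCost β γ cplus W t + cminus * u := by
  rw [bellObj, if_neg h.not_ge, idleCost]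
  ring_nf

theorem bellRHS_eq_of_reachCost {σ : ℝ} (hcm : 0 ≤ cminus) (hW : Monotone W)
    (hWσ : ∀ y ≤ σ, W y = W σ)
    (hreach : ∀ t, σ ≤ t → reachCost β γ cplus cminus r δ μ W t = W t)
    (hreach_lt : ∀ t < σ, W σ ≤ reachCost β γ cplus cminus r δ μ W t)
    (hidle : ∀ t, 0 ≤ t → t < μ → W t ≤ idleCost β γ cplus W t)
    {x : ℝ} (hx : 0 ≤ x) : W x = bellRHS β γ cplus cminus r δ μ W x := by
  have hWx_le_reach : ∀ t, x ≤ t → W x ≤ reachCost β γ cplus cminus r δ μ W t := by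
    intro t hxt
    rcases le_or_gt σ t with hσt | htσ
    · exact (hreach t hσt).symm ▸ hW hxt
    · exact (hWσ x (hxt.trans htσ.le)).symm ▸ hreach_lt t htσ
  have hlow (t u : ℝ) (hxt : x ≤ t) (hu : 0 ≤ u) :
      W x ≤ bellObj β γ cplus cminus r δ μ W t u := by
    by_cases h : μ ≤ t + u
    · exact (hWx_le_reach t hxt).trans (reachCost_le_bellObj hcm hu h)
    · rw [bellObj_of_lt (not_le.1 h)]
      have := hidle t (hx.trans hxt) (by linarith)
      nlinarith [hW hxt]
  have hattained :
      bellObj β γ cplus cminus r δ μ W (max x σ) (max (μ - max x σ) 0) = W x := by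
    rw [bellObj_max_sub_zero, hreach _ (le_max_right x σ)]
    rcases le_total x σ with hxσ | hσx
    · rw [max_eq_right hxσ, hWσ x hxσ]
    · rw [max_eq_left hσx]
  rw [bellRHS]
  refine Eq.symm (IsLeast.csInf_eq
    ⟨⟨max x σ, _, le_max_left x σ, le_max_right _ 0, hattained.symm⟩, ?_⟩)
  rintro v ⟨t, u, hxt, hu, rfl⟩
  exact hlow t u hxt hu

theorem le_idleCost_of_monotoneOn_sub {L : ℝ} (hβ1 : β ≤ 1) (hγ1 : γ ≤ 1)
    (hL : L * (1 - γ) ≤ (1 - β * γ) * cplus) (hW : Monotone W)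
    (hWL : MonotoneOn (fun y => L * y - W y) (Iic μ)) (hWμ : W μ ≤ 0) {t : ℝ} (ht0 : 0 ≤ t)
    (htμ : t < μ) : W t ≤ idleCost β γ cplus W t := by
  have hγt : γ * t ≤ t := mul_le_of_le_one_left ht0 hγ1
  have hWγt : W (γ * t) ≤ 0 := (hW (hγt.trans htμ.le)).trans hWμ
  have hslope : L * (γ * t) - W (γ * t) ≤ L * t - W t :=
    hWL (hγt.trans htμ.le) htμ.le hγt
  rw [idleCost]
  nlinarith [mul_le_mul_of_nonneg_right hL ht0,
    mul_nonpos_of_nonneg_of_nonpos (sub_nonneg.2 hβ1) hWγt]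

end Bellman

structure IsBellSeq (β γ cplus cminus r δ μ : ℝ) (s ξ : ℕ → ℝ) : Prop where
  s_zero : s 0 = μ
  xi_zero : ξ 0 = cplus * μ - r / (1 - β)
  s_succ : ∀ k, s (k + 1) = (s k - δ) / γ
  xi_succ : ∀ k, ξ (k + 1) = bellSlope β γ cplus cminus (k + 1) * (s (k + 1) - s k) + ξ k

namespace IsBellSeq

variable {β γ cplus cminus r δ μ : ℝ} {s ξ : ℕ → ℝ} {n : ℕ} {t : ℝ}

theorem mul_s_succ_add (h : IsBellSeq β γ cplus cminus r δ μ s ξ) (hγ : γ ≠ 0) (k : ℕ) :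
    γ * s (k + 1) + δ = s k := by
  rw [h.s_succ]
  field_simp
  ring

theorem one_sub_mul_xi_zero (h : IsBellSeq β γ cplus cminus r δ μ s ξ) (hβ : β ≠ 1) :
    (1 - β) * ξ 0 = (1 - β) * cplus * μ - r := by
  have : 1 - β ≠ 0 := sub_ne_zero.2 hβ.symm
  rw [h.xi_zero]
  field_simp

theorem xi_zero_nonpos (h : IsBellSeq β γ cplus cminus r δ μ s ξ) (hβ1 : β < 1)
    (hγ0 : 0 < γ) (hγ1 : γ < 1) (hcm : 0 < cminus) (hμ : 0 ≤ μ) (hμsmall : μ < δ / (1 - γ))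
    (hrbig : (1 - β) * cminus * δ / ((1 - γ) * (1 - β * γ)) ≤ r)
    (hcm2 : (1 - β * γ) * cplus < cminus) : ξ 0 ≤ 0 := by
  have h1β : 0 < 1 - β := by linarith
  have h1γ : 0 < 1 - γ := by linarith
  have h1q : 0 < 1 - β * γ := by nlinarith
  have hδ : μ * (1 - γ) < δ := (lt_div_iff₀ h1γ).1 hμsmall
  have hr : (1 - β) * cminus * δ ≤ r * ((1 - γ) * (1 - β * γ)) :=
    (div_le_iff₀ (by positivity)).1 hrbig
  have hcmμ : (1 - β) * cminus * μ ≤ r * (1 - β * γ) := by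
    refine le_of_mul_le_mul_right ?_ h1γ
    nlinarith [mul_le_mul_of_nonneg_left hδ.le (by positivity : 0 ≤ (1 - β) * cminus)]
  have hcpμ : (1 - β) * cplus * μ ≤ r := by
    refine le_of_mul_le_mul_right ?_ h1q
    nlinarith [mul_le_mul_of_nonneg_left hcm2.le (by positivity : 0 ≤ (1 - β) * μ)]
  nlinarith [h.one_sub_mul_xi_zero hβ1.ne]

theorem reach_identity (h : IsBellSeq β γ cplus cminus r δ μ s ξ) (hβ : β ≠ 1)
    (hγ : γ ≠ 0) (hq : β * γ ≠ 1) (k : ℕ) (t : ℝ) :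
    (1 - β * γ) * cplus * t + cminus * (μ - t) - (r + β * cplus * δ)
        + β * (bellSlope β γ cplus cminus k * (γ * t + δ - s k) + ξ k)
      = bellSlope β γ cplus cminus (k + 1) * (t - s (k + 1)) + ξ (k + 1) := by
  set a := bellSlope β γ cplus cminus
  have ha := bellSlope_succ (cplus := cplus) (cminus := cminus) hq
  have ha0 : a 0 = cplus := bellSlope_zero
  have ha1 : a 1 = cplus - cminus := bellSlope_one hq
  have hstep := h.mul_s_succ_add hγ
  -- `hinv k` is the identity at `t = 0`; the coefficients of `t` agree by `bellSlope_succ`.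
  have hinv : ∀ k, (1 - β) * ξ k
      = a (k + 1) * s k - β * γ * a k * s (k + 1) + cminus * μ - r - β * cplus * δ := by
    intro k
    induction k with
    | zero =>
      linear_combination h.one_sub_mul_xi_zero hβ - s 0 * ha1 + (β * γ * s 1) * ha0
        + (β * cplus) * hstep 0
        - ((1 - β) * cplus - cminus) * h.s_zero
    | succ k ih =>
      rw [h.xi_succ k]
      linear_combination ih - s (k + 1) * ha (k + 1) + (β * a (k + 1)) * hstep (k + 1)
        + s (k + 1) * ha k - (β * a (k + 1)) * hstep k
  linear_combination (-t) * ha k - h.xi_succ k - hinv k + (β * a k) * hstep k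


theorem reachCost_bellW (h : IsBellSeq β γ cplus cminus r δ μ s ξ) (hβ : β ≠ 1)
    (hγ : 0 < γ) (hq : β * γ ≠ 1) (hs : StrictAnti s) (ht : s n ≤ t) :
    reachCost β γ cplus cminus r δ μ (bellW cplus (bellSlope β γ cplus cminus) s ξ n) t
      = bellW cplus (bellSlope β γ cplus cminus) s ξ n t := by
  have hstep := h.mul_s_succ_add hγ.ne'
  rcases le_or_gt (s 0) t with h0 | h0
  · have harg : s 0 ≤ γ * t + δ := by
      rw [← hstep 0]
      gcongr
      exact (hs.antitone (Nat.zero_le 1)).trans h0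
    rw [reachCost, max_eq_right (by linarith [h.s_zero]), bellW_of_ge hs.antitone h0,
      bellW_of_ge hs.antitone harg]
    linear_combination -(h.one_sub_mul_xi_zero hβ) + (1 - β) * cplus * h.s_zero
  · obtain ⟨k, hk, hkt⟩ := exists_mem_Ico_succ h0 ht
    rw [reachCost, max_eq_left (by linarith [h.s_zero]),
      bellW_mul_add_of_mem_Ico hs h.xi_succ hstep hγ.le bellSlope_zero hk.le hkt,
      bellW_of_mem_Icc hs h.xi_succ hk (Ico_subset_Icc_self hkt)]
    exact h.reach_identity hβ hγ.ne' hq k t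

theorem bellW_le_reachCost (h : IsBellSeq β γ cplus cminus r δ μ s ξ) (hβ0 : 0 ≤ β)
    (hβ : β ≠ 1) (hγ : 0 < γ) (hq : β * γ ≠ 1) (hs : StrictAnti s)
    (ha : 0 ≤ bellSlope β γ cplus cminus n)
    (ha_succ : bellSlope β γ cplus cminus (n + 1) ≤ 0) (ht : t < s n) :
    bellW cplus (bellSlope β γ cplus cminus) s ξ n (s n)
      ≤ reachCost β γ cplus cminus r δ μ
          (bellW cplus (bellSlope β γ cplus cminus) s ξ n) t := by
  set a := bellSlope β γ cplus cminus
  have hstep := h.mul_s_succ_add hγ.ne'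
  have hline : a n * (γ * t + δ - s n) + ξ n ≤ bellW cplus a s ξ n (γ * t + δ) := by
    rcases lt_or_ge t (s (n + 1)) with h1 | h1
    · have harg : γ * t + δ < s n := by
        rw [← hstep n]
        gcongr
      rw [bellW_of_lt hs.antitone harg]
      nlinarith
    · exact (bellW_mul_add_of_mem_Ico hs h.xi_succ hstep hγ.le bellSlope_zero le_rfl
        ⟨h1, ht⟩).ge
  rw [bellW_apply_s hs le_rfl]
  calc ξ n ≤ a (n + 1) * (t - s (n + 1)) + ξ (n + 1) := by
        rw [h.xi_succ n]
        nlinarith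
    _ = (1 - β * γ) * cplus * t + cminus * (μ - t) - (r + β * cplus * δ)
          + β * (a n * (γ * t + δ - s n) + ξ n) := (h.reach_identity hβ hγ.ne' hq n t).symm
    _ ≤ reachCost β γ cplus cminus r δ μ (bellW cplus a s ξ n) t := by
        rw [reachCost, max_eq_left (by linarith [hs.antitone n.zero_le, h.s_zero])]
        gcongr

end IsBellSeq

theorem stmt_2_general (β γ cplus cminus r δ μ : ℝ)
    (hβ : β ∈ Set.Ioo (0:ℝ) 1) (hγ : γ ∈ Set.Ioo (0:ℝ) 1)
    (hcm : 0 < cminus) (hcmcp : cminus < cplus)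
    (hμpos : 0 < μ)
    (hμsmall : μ < δ / (1 - γ))
    (hrbig : (1 - β) * cminus * δ / ((1 - γ) * (1 - β * γ)) ≤ r)
    (hcm2 : (1 - β * γ) * cplus < cminus)
    (s ξ : ℕ → ℝ)
    (hs0 : s 0 = μ) (hξ0 : ξ 0 = cplus * μ - r / (1 - β))
    (hsrec : ∀ k : ℕ, s (k + 1) = (s k - δ) / γ)
    (hξrec : ∀ k : ℕ, ξ (k + 1) =
        (cplus - ((1 - (β * γ) ^ (k + 1)) / (1 - β * γ)) * cminus) * (s (k + 1) - s k) + ξ k)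
    (W : ℝ → ℝ)
    (hW : ∀ x : ℝ, W x =
        (if x < s (bellK β γ cplus cminus - 1) then ξ (bellK β γ cplus cminus - 1) else 0)
        + ∑ k ∈ Finset.Icc 1 (bellK β γ cplus cminus - 1),
            (if s k ≤ x ∧ x < s (k - 1) then
              (cplus - ((1 - (β * γ) ^ k) / (1 - β * γ)) * cminus) * (x - s k) + ξ k else 0)
        + (if s 0 ≤ x then cplus * (x - s 0) + ξ 0 else 0)) :
    ∀ x : ℝ, 0 ≤ x → W x = bellRHS β γ cplus cminus r δ μ W x := by
  obtain ⟨⟨hβ0, hβ1⟩, ⟨hγ0, hγ1⟩⟩ := And.intro hβ hγ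
  have hq : β * γ < 1 := by nlinarith
  have hseq : IsBellSeq β γ cplus cminus r δ μ s ξ := ⟨hs0, hξ0, hsrec, hξrec⟩
  have hs : StrictAnti s :=
    strictAnti_of_mul_succ_add hγ0 hγ1 (hseq.mul_s_succ_add hγ0.ne') (hs0 ▸ hμsmall)
  have hpos (k : ℕ) := bellSlope_pos_iff (k := k) hβ0 hβ1 hγ0 hγ1 hcm (hcm.trans hcmcp) hcm2
  have hK : 1 < bellK β γ cplus cminus := (hpos 1).1 (by rw [bellSlope_one hq.ne]; linarith)
  set n := bellK β γ cplus cminus - 1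
  have hslope_le (k : ℕ) : bellSlope β γ cplus cminus (k + 1) ≤ cplus - cminus :=
    bellSlope_one (cplus := cplus) (cminus := cminus) hq.ne ▸
      bellSlope_antitone (by positivity) hq.ne hcm.le (by omega)
  obtain rfl : W = bellW cplus (bellSlope β γ cplus cminus) s ξ n := funext hW
  have hmono := monotone_bellW (n := n) hs hseq.xi_succ (hcm.trans hcmcp).le
    fun k hk => ((hpos (k + 1)).2 (by omega)).le
  have hsub := monotoneOn_sub_bellW (c := cplus) (n := n) hs hseq.xi_succ
    (sub_nonneg.2 hcmcp.le) fun k _ => hslope_le k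
  rw [hs0] at hsub
  have hL : (cplus - cminus) * (1 - γ) ≤ (1 - β * γ) * cplus := by
    nlinarith [mul_pos (mul_pos (hcm.trans hcmcp) hγ0) (sub_pos.2 hβ1),
      mul_pos hcm (sub_pos.2 hγ1)]
  intro x hx
  refine bellRHS_eq_of_reachCost hcm.le hmono
    (fun y hy => (bellW_of_le hs hy).trans (bellW_apply_s hs le_rfl).symm)
    (fun t ht => hseq.reachCost_bellW hβ1.ne hγ0 hq.ne hs ht)
    (fun t ht => hseq.bellW_le_reachCost hβ0.le hβ1.ne hγ0 hq.ne hs ((hpos n).2 (by omega)).le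
      (not_lt.1 fun h => by have := (hpos (n + 1)).1 h; omega) ht)
    (fun t ht0 htμ => le_idleCost_of_monotoneOn_sub hβ1.le hγ1.le hL hmono hsub ?_ ht0 htμ) hx
  rw [← hs0, bellW_apply_s hs n.zero_le]
  exact hseq.xi_zero_nonpos hβ1 hγ0 hγ1 hcm hμpos.le hμsmall hrbig hcm2

/-- Claim B.1 (small-threshold fixed point, Theorem 3.1): under
`μ < δ/(1-γ)`, `r ≥ (1-β)c⁻δ/((1-γ)(1-βγ))`, `c⁻ ≥ βγc⁺` and `c⁻ > (1-βγ)c⁺`, the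
piecewise-linear function `W` built from the sequences `s_k, ξ_k` satisfies the
two-level Bellman fixed-point equation at every `x ≥ 0`. -/
theorem stmt_2 (β γ cplus cminus r δ μ : ℝ)
    (hβ : β ∈ Set.Ioo (0:ℝ) 1) (hγ : γ ∈ Set.Ioo (0:ℝ) 1)
    (hcm : 0 < cminus) (hcmcp : cminus < cplus)
    (hr : 0 < r) (hδ : 0 ≤ δ) (hμpos : 0 < μ)
    (hμsmall : μ < δ / (1 - γ))
    (hrbig : (1 - β) * cminus * δ / ((1 - γ) * (1 - β * γ)) ≤ r)
    (hcm1 : β * γ * cplus ≤ cminus)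
    (hcm2 : (1 - β * γ) * cplus < cminus)
    (s ξ : ℕ → ℝ)
    (hs0 : s 0 = μ) (hξ0 : ξ 0 = cplus * μ - r / (1 - β))
    (hsrec : ∀ k : ℕ, s (k + 1) = (s k - δ) / γ)
    (hξrec : ∀ k : ℕ, ξ (k + 1) =
        (cplus - ((1 - (β * γ) ^ (k + 1)) / (1 - β * γ)) * cminus) * (s (k + 1) - s k) + ξ k)
    (W : ℝ → ℝ)
    (hW : ∀ x : ℝ, W x =
        (if x < s (bellK β γ cplus cminus - 1) then ξ (bellK β γ cplus cminus - 1) else 0)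
        + ∑ k ∈ Finset.Icc 1 (bellK β γ cplus cminus - 1),
            (if s k ≤ x ∧ x < s (k - 1) then
              (cplus - ((1 - (β * γ) ^ k) / (1 - β * γ)) * cminus) * (x - s k) + ξ k else 0)
        + (if s 0 ≤ x then cplus * (x - s 0) + ξ 0 else 0)) :
    ∀ x : ℝ, 0 ≤ x → W x = bellRHS β γ cplus cminus r δ μ W x :=
  stmt_2_general β γ cplus cminus r δ μ hβ hγ hcm hcmcp hμpos hμsmall hrbig hcm2 s ξ hs0 hξ0 hsrec
    hξrec W hW
end

section
/- Assume μ < δ/(1−γ), r ≥ (1−β)·c⁻·δ / ((1−γ)(1−βγ)), c⁻ ≥ βγ·c⁺ and c⁻ > (1−βγ)·c⁺, and let W be the piecewise-linear function of the small-threshold fixed point (built from the sequences s_k, ξ_k with s₀ = μ, ξ₀ = c⁺μ − r/(1−β), s_k = (s_{k−1}−δ)/γ, ξ_k = (c⁺ − ((1−β^kγ^k)/(1−βγ))c⁻)(s_k − s_{k−1}) + ξ_{k−1}). Set x° := max{0, s_{K−1}}. Then for every x ∈ [0,μ], the infimum over x̃ ≥ x and u ≥ 0 of (1−βγ)·c⁺·x̃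 + c⁻·u − (r+β·c⁺·δ)·𝟙{x̃+u ≥ μ} + β·W(γ·x̃ + δ·𝟙{x̃+u ≥ μ}) is attained at x̃ = max{x, x°} and u = μ − max{x, x°}; equivalently, the agent's optimal action is pure gaming of magnitude μ − x when x ∈ [x°, μ], and the mixture (improvement x° − x, gaming μ − x°) when x ∈ [0, x°). -/
theorem pow_le_iff_ceil_log_div_log_le {q a : ℝ} (hq0 : 0 < q) (hq1 : q < 1) (ha : 0 < a)
    (k : ℕ) : q ^ k ≤ a ↔ ⌈Real.log a / Real.log q⌉₊ ≤ k := by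
  rw [Nat.ceil_le, div_le_iff_of_neg (Real.log_neg hq0 hq1), Real.pow_le_iff_le_log hq0 ha]

/-- `c⁺ - c⁻ (1 + q + ⋯ + q^(k-1))`, the slope of the `k`-th piece of the value function. -/
noncomputable def pieceSlope (q cp cm : ℝ) (k : ℕ) : ℝ := cp - (1 - q ^ k) / (1 - q) * cm

section pieceSlope

variable {q cp cm : ℝ}

@[simp] theorem pieceSlope_zero : pieceSlope q cp cm 0 = cp := by simp [pieceSlope]

theorem pieceSlope_sub_pieceSlope_succ (hq : q ≠ 1) (k : ℕ) :
    pieceSlope q cp cm k - pieceSlope q cp cm (k + 1) = q ^ k * cm := by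
  have : 1 - q ≠ 0 := sub_ne_zero.mpr hq.symm
  simp only [pieceSlope]
  field_simp
  ring

theorem pieceSlope_succ (hq : q ≠ 1) (k : ℕ) :
    pieceSlope q cp cm (k + 1) = (1 - q) * cp - cm + q * pieceSlope q cp cm k := by
  have : 1 - q ≠ 0 := sub_ne_zero.mpr hq.symm
  simp only [pieceSlope]
  field_simp
  ring

theorem pieceSlope_antitone (hq0 : 0 ≤ q) (hq1 : q ≠ 1) (hcm : 0 ≤ cm) :
    Antitone (pieceSlope q cp cm) :=
  antitone_nat_of_succ_le fun k => by
    linarith [pieceSlope_sub_pieceSlope_succ (cp := cp) (cm := cm) hq1 k,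
      mul_nonneg (pow_nonneg hq0 k) hcm]

theorem pieceSlope_le (hq0 : 0 ≤ q) (hq1 : q ≠ 1) (hcm : 0 ≤ cm) (k : ℕ) :
    pieceSlope q cp cm k ≤ cp := by
  simpa using pieceSlope_antitone (cp := cp) hq0 hq1 hcm k.zero_le

end pieceSlope

theorem pieceSlope_pos_iff_lt_bellK {β γ cp cm : ℝ} (hq0 : 0 < β * γ) (hq1 : β * γ < 1)
    (hcm : 0 < cm) (hcm2 : (1 - β * γ) * cp < cm) (k : ℕ) :
    0 < pieceSlope (β * γ) cp cm k ↔ k < bellK β γ cp cm := by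
  have ha : 0 < 1 - (1 - β * γ) * cp / cm := by
    rw [sub_pos, div_lt_one hcm]; exact hcm2
  rw [← not_iff_not, not_lt, not_lt, bellK, ← pow_le_iff_ceil_log_div_log_le hq0 hq1 ha,
    pieceSlope, sub_nonpos, div_mul_eq_mul_div, le_div_iff₀ (by linarith), le_sub_comm,
    div_le_iff₀ hcm]
  constructor <;> intro h <;> linarith

theorem one_lt_bellK {β γ cp cm : ℝ} (hq0 : 0 < β * γ) (hq1 : β * γ < 1) (hcm : 0 < cm)
    (hcmcp : cm < cp) (hcm2 : (1 - β * γ) * cp < cm) : 1 < bellK β γ cp cm := by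
  rw [← pieceSlope_pos_iff_lt_bellK hq0 hq1 hcm hcm2, pieceSlope, pow_one,
    div_self (sub_ne_zero.mpr hq1.ne'), one_mul, sub_pos]
  exact hcmcp

section sequence

variable {γ δ : ℝ} {s : ℕ → ℝ}

theorem shift_succ_of_rec (hγ : γ ≠ 0) (hrec : ∀ k, s (k + 1) = (s k - δ) / γ) (k : ℕ) :
    γ * s (k + 1) + δ = s k := by
  rw [hrec k, mul_div_cancel₀ _ hγ, sub_add_cancel]

theorem pow_mul_sub_eq_of_shift (hγ : γ ≠ 1) (hshift : ∀ k, γ * s (k + 1) + δ = s k) (k : ℕ) :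
    γ ^ k * (δ / (1 - γ) - s k) = δ / (1 - γ) - s 0 := by
  have hD : γ * (δ / (1 - γ)) + δ = δ / (1 - γ) := by
    field_simp [sub_ne_zero.mpr hγ.symm]; ring
  induction k with
  | zero => simp
  | succ k ih => rw [← ih, pow_succ, mul_assoc, ← hshift k]; linear_combination γ ^ k * hD

theorem lt_div_of_shift (hγ0 : 0 < γ) (hγ1 : γ < 1) (hshift : ∀ k, γ * s (k + 1) + δ = s k)
    (h0 : s 0 < δ / (1 - γ)) (k : ℕ) : s k < δ / (1 - γ) := by
  have := pow_mul_sub_eq_of_shift hγ1.ne hshift k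
  nlinarith [pow_pos hγ0 k]

theorem strictAnti_of_shift (hγ0 : 0 < γ) (hγ1 : γ < 1) (hshift : ∀ k, γ * s (k + 1) + δ = s k)
    (h0 : s 0 < δ / (1 - γ)) : StrictAnti s := by
  refine strictAnti_nat_of_succ_lt fun k => ?_
  have h := lt_div_of_shift hγ0 hγ1 hshift h0 (k + 1)
  rw [lt_div_iff₀ (by linarith)] at h
  linarith [hshift k]

end sequence

theorem exists_mem_Icc_of_le_of_le {α : Type*} [LinearOrder α] (s : ℕ → α) {y : α} :
    ∀ {N : ℕ}, 0 < N → s N ≤ y → y ≤ s 0 → ∃ i < N, y ∈ Set.Icc (s (i + 1)) (s i)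
  | N + 1, _, hN, h0 => by
    rcases le_or_gt (s N) y with h | h
    · rcases N.eq_zero_or_pos with rfl | hpos
      · exact ⟨0, Nat.zero_lt_one, hN, h0⟩
      · obtain ⟨i, hi, hy⟩ := exists_mem_Icc_of_le_of_le s hpos h h0
        exact ⟨i, by omega, hy⟩
    · exact ⟨N, N.lt_succ_self, hN, h.le⟩

theorem le_or_ge_or_exists_mem_Icc {α : Type*} [LinearOrder α] {s : ℕ → α} (N : ℕ) (y : α) :
    y ≤ s N ∨ s 0 ≤ y ∨ ∃ i < N, y ∈ Set.Icc (s (i + 1)) (s i) := by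
  rcases le_or_gt y (s N) with hN | hN
  · exact Or.inl hN
  rcases le_or_gt (s 0) y with h0 | h0
  · exact Or.inr (Or.inl h0)
  rcases N.eq_zero_or_pos with rfl | hpos
  · exact absurd hN h0.not_gt
  · exact Or.inr (Or.inr (exists_mem_Icc_of_le_of_le s hpos hN.le h0.le))

theorem monotone_of_forall_exists_nonneg_subgradient {f : ℝ → ℝ}
    (h : ∀ y, ∃ m, 0 ≤ m ∧ ∀ z, f y + m * (z - y) ≤ f z) : Monotone f := by
  intro a b hab
  obtain ⟨m, hm, hf⟩ := h a
  nlinarith [hf b, mul_nonneg hm (sub_nonneg.2 hab)]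

theorem le_add_mul_sub_of_forall_exists_subgradient_le {f : ℝ → ℝ} {c : ℝ}
    (h : ∀ y, ∃ m ≤ c, ∀ z, f y + m * (z - y) ≤ f z) {a b : ℝ} (hab : a ≤ b) :
    f b ≤ f a + c * (b - a) := by
  obtain ⟨m, hm, hf⟩ := h b
  nlinarith [hf a, mul_le_mul_of_nonneg_right hm (sub_nonneg.2 hab)]

noncomputable def affinePiece (q cp cm : ℝ) (s ξ : ℕ → ℝ) (k : ℕ) (y : ℝ) : ℝ :=
  pieceSlope q cp cm k * (y - s k) + ξ k

/-- The function `W` of the theorem, with `N = K - 1`. -/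
noncomputable def valueFn (q cp cm : ℝ) (s ξ : ℕ → ℝ) (N : ℕ) (y : ℝ) : ℝ :=
  (if y < s N then ξ N else 0)
    + ∑ k ∈ Finset.Icc 1 N, (if s k ≤ y ∧ y < s (k - 1) then affinePiece q cp cm s ξ k y else 0)
    + (if s 0 ≤ y then cp * (y - s 0) + ξ 0 else 0)

section valueFn

variable {q cp cm : ℝ} {s ξ : ℕ → ℝ} {N : ℕ}

theorem affinePiece_sub_affinePiece_succ (hq : q ≠ 1)
    (hξ : ∀ k, affinePiece q cp cm s ξ (k + 1) (s k) = ξ k) (k : ℕ) (y : ℝ) :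
    affinePiece q cp cm s ξ k y - affinePiece q cp cm s ξ (k + 1) y = q ^ k * cm * (y - s k) := by
  have h := hξ k
  simp only [affinePiece] at h ⊢
  linear_combination (y - s k) * pieceSlope_sub_pieceSlope_succ (cp := cp) (cm := cm) hq k - h

theorem affinePiece_le_affinePiece_of_forall_le (hq0 : 0 ≤ q) (hq1 : q ≠ 1) (hcm : 0 ≤ cm)
    (hξ : ∀ k, affinePiece q cp cm s ξ (k + 1) (s k) = ξ k) {y : ℝ} {k j : ℕ} (hkj : k ≤ j)
    (hy : ∀ i ∈ Finset.Ico k j, y ≤ s i) :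
    affinePiece q cp cm s ξ k y ≤ affinePiece q cp cm s ξ j y := by
  induction j, hkj using Nat.le_induction with
  | base => exact le_rfl
  | succ j hkj ih =>
    have hj := hy j (Finset.mem_Ico.2 ⟨hkj, j.lt_succ_self⟩)
    have := ih fun i hi => hy i (Finset.Ico_subset_Ico_right j.le_succ hi)
    nlinarith [affinePiece_sub_affinePiece_succ hq1 hξ j y, mul_nonneg (pow_nonneg hq0 j) hcm]

theorem affinePiece_le_affinePiece_of_forall_ge (hq0 : 0 ≤ q) (hq1 : q ≠ 1) (hcm : 0 ≤ cm)
    (hξ : ∀ k, affinePiece q cp cm s ξ (k + 1) (s k) = ξ k) {y : ℝ} {k j : ℕ} (hkj : k ≤ j)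
    (hy : ∀ i ∈ Finset.Ico k j, s i ≤ y) :
    affinePiece q cp cm s ξ j y ≤ affinePiece q cp cm s ξ k y := by
  induction j, hkj using Nat.le_induction with
  | base => exact le_rfl
  | succ j hkj ih =>
    have hj := hy j (Finset.mem_Ico.2 ⟨hkj, j.lt_succ_self⟩)
    have := ih fun i hi => hy i (Finset.Ico_subset_Ico_right j.le_succ hi)
    nlinarith [affinePiece_sub_affinePiece_succ hq1 hξ j y, mul_nonneg (pow_nonneg hq0 j) hcm]

theorem valueFn_of_lt (hs : Antitone s) {y : ℝ} (hy : y < s N) :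
    valueFn q cp cm s ξ N y = ξ N := by
  rw [valueFn, if_pos hy, if_neg (fun h => (hs N.zero_le).not_gt (h.trans_lt hy)),
    Finset.sum_eq_zero fun k hk => if_neg fun h =>
      (hs (Finset.mem_Icc.1 hk).2).not_gt (h.1.trans_lt hy)]
  ring

theorem valueFn_of_mem (hs : Antitone s) {y : ℝ} {k : ℕ} (hk : k ∈ Finset.Icc 1 N)
    (h1 : s k ≤ y) (h2 : y < s (k - 1)) :
    valueFn q cp cm s ξ N y = affinePiece q cp cm s ξ k y := by
  obtain ⟨hk1, hkN⟩ := Finset.mem_Icc.1 hk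
  rw [valueFn, if_neg (hs hkN |>.trans h1).not_gt,
    if_neg (fun h => (hs (k - 1).zero_le).not_gt (h.trans_lt h2)),
    Finset.sum_eq_single_of_mem k hk fun j hj hjk => if_neg fun h => ?_, if_pos ⟨h1, h2⟩]
  · ring
  · obtain ⟨hj1, -⟩ := Finset.mem_Icc.1 hj
    rcases hjk.lt_or_gt with hjk | hjk
    · exact (hs (by omega : j ≤ k - 1)).not_gt (h.1.trans_lt h2)
    · exact (hs (by omega : k ≤ j - 1)).not_gt (h1.trans_lt h.2)

theorem valueFn_of_ge (hs : Antitone s) {y : ℝ} (hy : s 0 ≤ y) :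
    valueFn q cp cm s ξ N y = affinePiece q cp cm s ξ 0 y := by
  rw [valueFn, if_neg (hs N.zero_le |>.trans hy).not_gt, if_pos hy,
    Finset.sum_eq_zero fun k hk => if_neg fun h =>
      (hs (k - 1).zero_le).not_gt (hy.trans_lt h.2)]
  simp [affinePiece]

theorem valueFn_s_eq (hs : StrictAnti s) {k : ℕ} (hk : k ≤ N) :
    valueFn q cp cm s ξ N (s k) = ξ k := by
  rcases k with _ | k
  · simp [valueFn_of_ge hs.antitone le_rfl, affinePiece]
  · rw [valueFn_of_mem hs.antitone (Finset.mem_Icc.2 ⟨k.succ_pos, hk⟩) le_rfl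
      (hs k.lt_succ_self)]
    simp [affinePiece]

theorem valueFn_of_le (hs : StrictAnti s) {y : ℝ} (hy : y ≤ s N) :
    valueFn q cp cm s ξ N y = ξ N := by
  rcases hy.lt_or_eq with hy | rfl
  · exact valueFn_of_lt hs.antitone hy
  · exact valueFn_s_eq hs le_rfl

theorem valueFn_eq_affinePiece_succ (hs : StrictAnti s)
    (hξ : ∀ k, affinePiece q cp cm s ξ (k + 1) (s k) = ξ k) {y : ℝ} {i : ℕ} (hi : i < N)
    (h1 : s (i + 1) ≤ y) (h2 : y ≤ s i) :
    valueFn q cp cm s ξ N y = affinePiece q cp cm s ξ (i + 1) y := by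
  rcases h2.lt_or_eq with h2 | rfl
  · exact valueFn_of_mem hs.antitone (Finset.mem_Icc.2 ⟨i.succ_pos, hi⟩) h1 h2
  · rw [valueFn_s_eq hs hi.le, hξ]

theorem valueFn_shift_eq {γ δ : ℝ} (hs : StrictAnti s)
    (hξ : ∀ k, affinePiece q cp cm s ξ (k + 1) (s k) = ξ k) (hγ : 0 ≤ γ)
    (hshift : ∀ k, γ * s (k + 1) + δ = s k) {y : ℝ} {i : ℕ} (hi : i ≤ N)
    (h1 : s (i + 1) ≤ y) (h2 : y ≤ s i) :
    valueFn q cp cm s ξ N (γ * y + δ) = affinePiece q cp cm s ξ i (γ * y + δ) := by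
  have hlow := mul_le_mul_of_nonneg_left h1 hγ
  have hup := mul_le_mul_of_nonneg_left h2 hγ
  rcases i with _ | j
  · exact valueFn_of_ge hs.antitone (by linarith [hshift 0])
  · exact valueFn_eq_affinePiece_succ hs hξ hi (by linarith [hshift (j + 1)])
      (by linarith [hshift j])

theorem affinePiece_le_valueFn (hq0 : 0 ≤ q) (hq1 : q ≠ 1) (hcm : 0 ≤ cm) (hs : StrictAnti s)
    (hξ : ∀ k, affinePiece q cp cm s ξ (k + 1) (s k) = ξ k) (hslope : 0 ≤ pieceSlope q cp cm N)
    {k : ℕ} (hk : k ≤ N) (y : ℝ) : affinePiece q cp cm s ξ k y ≤ valueFn q cp cm s ξ N y := by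
  rcases le_or_ge_or_exists_mem_Icc N y with hy | hy | ⟨i, hi, h1, h2⟩
  · rw [valueFn_of_le hs hy]
    calc affinePiece q cp cm s ξ k y
        ≤ affinePiece q cp cm s ξ N y := affinePiece_le_affinePiece_of_forall_le hq0 hq1 hcm hξ hk
          fun i hi => hy.trans (hs.antitone (Finset.mem_Ico.1 hi).2.le)
      _ ≤ ξ N := by
          have := mul_nonpos_of_nonneg_of_nonpos hslope (sub_nonpos.2 hy)
          simp only [affinePiece]; linarith
  · rw [valueFn_of_ge hs.antitone hy]
    exact affinePiece_le_affinePiece_of_forall_ge hq0 hq1 hcm hξ k.zero_le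
      fun i _ => (hs.antitone i.zero_le).trans hy
  · rw [valueFn_eq_affinePiece_succ hs hξ hi h1 h2]
    rcases le_total k (i + 1) with hki | hik
    · exact affinePiece_le_affinePiece_of_forall_le hq0 hq1 hcm hξ hki
        fun j hj => h2.trans (hs.antitone (by have := (Finset.mem_Ico.1 hj).2; omega))
    · exact affinePiece_le_affinePiece_of_forall_ge hq0 hq1 hcm hξ hik
        fun j hj => (hs.antitone (Finset.mem_Ico.1 hj).1).trans h1

theorem valueFn_add_pieceSlope_mul_le (hq0 : 0 ≤ q) (hq1 : q ≠ 1) (hcm : 0 ≤ cm) (hs : StrictAnti s)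
    (hξ : ∀ k, affinePiece q cp cm s ξ (k + 1) (s k) = ξ k) (hslope : 0 ≤ pieceSlope q cp cm N)
    {k : ℕ} (hk : k ≤ N) {y : ℝ} (hy : valueFn q cp cm s ξ N y = affinePiece q cp cm s ξ k y)
    (z : ℝ) :
    valueFn q cp cm s ξ N y + pieceSlope q cp cm k * (z - y) ≤ valueFn q cp cm s ξ N z := by
  have := affinePiece_le_valueFn hq0 hq1 hcm hs hξ hslope hk z
  rw [hy]; simp only [affinePiece] at this ⊢; linarith

theorem valueFn_exists_subgradient (hq0 : 0 ≤ q) (hq1 : q ≠ 1) (hcm : 0 ≤ cm) (hs : StrictAnti s)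
    (hξ : ∀ k, affinePiece q cp cm s ξ (k + 1) (s k) = ξ k) (hslope : 0 ≤ pieceSlope q cp cm N)
    (y : ℝ) : ∃ m, (0 ≤ m ∧ m ≤ cp) ∧
      ∀ z, valueFn q cp cm s ξ N y + m * (z - y) ≤ valueFn q cp cm s ξ N z := by
  have hanti := pieceSlope_antitone (cp := cp) hq0 hq1 hcm
  rcases le_or_ge_or_exists_mem_Icc N y with hy | hy | ⟨i, hi, h1, h2⟩
  · refine ⟨0, ⟨le_rfl, (hslope.trans (hanti N.zero_le)).trans_eq pieceSlope_zero⟩, fun z => ?_⟩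
    rw [valueFn_of_le hs hy, zero_mul, add_zero]
    rcases le_total z (s N) with hz | hz
    · rw [valueFn_of_le hs hz]
    · refine le_trans ?_ (affinePiece_le_valueFn hq0 hq1 hcm hs hξ hslope le_rfl z)
      simp only [affinePiece]; nlinarith
  · refine ⟨pieceSlope q cp cm 0, ⟨hslope.trans (hanti N.zero_le), pieceSlope_zero.le⟩,
      valueFn_add_pieceSlope_mul_le hq0 hq1 hcm hs hξ hslope N.zero_le
        (valueFn_of_ge hs.antitone hy)⟩
  · exact ⟨pieceSlope q cp cm (i + 1), ⟨hslope.trans (hanti hi), pieceSlope_le hq0 hq1 hcm _⟩,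
      valueFn_add_pieceSlope_mul_le hq0 hq1 hcm hs hξ hslope hi
        (valueFn_eq_affinePiece_succ hs hξ hi h1 h2)⟩

theorem valueFn_monotone (hq0 : 0 ≤ q) (hq1 : q ≠ 1) (hcm : 0 ≤ cm) (hs : StrictAnti s)
    (hξ : ∀ k, affinePiece q cp cm s ξ (k + 1) (s k) = ξ k) (hslope : 0 ≤ pieceSlope q cp cm N) :
    Monotone (valueFn q cp cm s ξ N) :=
  monotone_of_forall_exists_nonneg_subgradient fun y =>
    (valueFn_exists_subgradient hq0 hq1 hcm hs hξ hslope y).imp fun _ h => ⟨h.1.1, h.2⟩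

theorem valueFn_le_add_mul_sub (hq0 : 0 ≤ q) (hq1 : q ≠ 1) (hcm : 0 ≤ cm) (hs : StrictAnti s)
    (hξ : ∀ k, affinePiece q cp cm s ξ (k + 1) (s k) = ξ k) (hslope : 0 ≤ pieceSlope q cp cm N)
    {a b : ℝ} (hab : a ≤ b) :
    valueFn q cp cm s ξ N b ≤ valueFn q cp cm s ξ N a + cp * (b - a) :=
  le_add_mul_sub_of_forall_exists_subgradient_le (fun y =>
    (valueFn_exists_subgradient hq0 hq1 hcm hs hξ hslope y).imp fun _ h => ⟨h.1.2, h.2⟩) hab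

end valueFn

noncomputable def promotedValue (β γ cp cm r δ μ : ℝ) (W : ℝ → ℝ) (t : ℝ) : ℝ :=
  (1 - β * γ) * cp * t + cm * (μ - t) - (r + β * cp * δ) + β * W (γ * t + δ)

noncomputable def unpromotedValue (β γ cp : ℝ) (W : ℝ → ℝ) (t : ℝ) : ℝ :=
  (1 - β * γ) * cp * t + β * W (γ * t)

section bellman

variable {β γ cp cm r δ μ : ℝ} {W : ℝ → ℝ}

theorem bellObj_sub_eq_promotedValue (t : ℝ) :
    bellObj β γ cp cm r δ μ W t (μ - t) = promotedValue β γ cp cm r δ μ W t := by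
  simp [bellObj, promotedValue]

theorem promotedValue_le_bellObj (hcm : 0 ≤ cm) {t u : ℝ} (h : μ ≤ t + u) :
    promotedValue β γ cp cm r δ μ W t ≤ bellObj β γ cp cm r δ μ W t u := by
  simp only [bellObj, promotedValue, if_pos h, mul_one]
  nlinarith

theorem unpromotedValue_le_bellObj (hcm : 0 ≤ cm) {t u : ℝ} (hu : 0 ≤ u) (h : t + u < μ) :
    unpromotedValue β γ cp W t ≤ bellObj β γ cp cm r δ μ W t u := by
  simp only [bellObj, unpromotedValue, if_neg h.not_ge, mul_zero, add_zero, sub_zero]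
  nlinarith

theorem isLeast_bellObj (hcm : 0 ≤ cm) {x a : ℝ} (hxa : x ≤ a) (haμ : a ≤ μ)
    (hprom : ∀ t, x ≤ t → promotedValue β γ cp cm r δ μ W a ≤ promotedValue β γ cp cm r δ μ W t)
    (hunprom : ∀ t, x ≤ t → promotedValue β γ cp cm r δ μ W a ≤ unpromotedValue β γ cp W t) :
    IsLeast {v | ∃ xt u, x ≤ xt ∧ 0 ≤ u ∧ v = bellObj β γ cp cm r δ μ W xt u}
      (bellObj β γ cp cm r δ μ W a (μ - a)) := by
  refine ⟨⟨a, μ - a, hxa, sub_nonneg.2 haμ, rfl⟩, ?_⟩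
  rintro _ ⟨t, u, hxt, hu, rfl⟩
  rw [bellObj_sub_eq_promotedValue]
  rcases le_or_gt μ (t + u) with h | h
  · exact (hprom t hxt).trans (promotedValue_le_bellObj hcm h)
  · exact (hunprom t hxt).trans (unpromotedValue_le_bellObj hcm hu h)

theorem promotedValue_add_pieceSlope_mul_le (hβ : 0 ≤ β) (hq : β * γ ≠ 1) {a : ℝ} {i : ℕ}
    (hW : ∀ z, W (γ * a + δ) + pieceSlope (β * γ) cp cm i * (z - (γ * a + δ)) ≤ W z) (t : ℝ) :
    promotedValue β γ cp cm r δ μ W a + pieceSlope (β * γ) cp cm (i + 1) * (t - a)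
      ≤ promotedValue β γ cp cm r δ μ W t := by
  have := mul_le_mul_of_nonneg_left (hW (γ * t + δ)) hβ
  rw [pieceSlope_succ hq]
  simp only [promotedValue]
  linarith

theorem monotone_unpromotedValue (hβ : 0 ≤ β) (hγ : 0 ≤ γ) (hq : β * γ ≤ 1) (hcp : 0 ≤ cp)
    (hmono : Monotone W) : Monotone (unpromotedValue β γ cp W) := by
  intro a b hab
  have := mul_le_mul_of_nonneg_left (hmono (mul_le_mul_of_nonneg_left hab hγ)) hβ
  simp only [unpromotedValue]
  nlinarith [mul_nonneg (mul_nonneg (sub_nonneg.2 hq) hcp) (sub_nonneg.2 hab)]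

theorem antitone_promotedValue_sub_unpromotedValue (hβ : 0 ≤ β) (hγ : 0 ≤ γ)
    (hcm1 : β * γ * cp ≤ cm) (hmono : Monotone W)
    (hlip : ∀ a b, a ≤ b → W b ≤ W a + cp * (b - a)) :
    Antitone fun t => promotedValue β γ cp cm r δ μ W t - unpromotedValue β γ cp W t := by
  intro a b hab
  have hγab := mul_le_mul_of_nonneg_left hab hγ
  have h1 := mul_le_mul_of_nonneg_left (hlip (γ * a + δ) (γ * b + δ) (by linarith)) hβ
  have h2 := mul_le_mul_of_nonneg_left (hmono hγab) hβ
  simp only [promotedValue, unpromotedValue]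
  nlinarith [mul_nonneg (sub_nonneg.2 hcm1) (sub_nonneg.2 hab)]

theorem promotedValue_max_le_unpromotedValue (hβ : 0 ≤ β) (hγ : 0 ≤ γ) (hq : β * γ ≤ 1)
    (hcp : 0 ≤ cp) (hcm1 : β * γ * cp ≤ cm) (hmono : Monotone W)
    (hlip : ∀ a b, a ≤ b → W b ≤ W a + cp * (b - a)) {x a t : ℝ} (hx : 0 ≤ x) (ha : 0 ≤ a)
    (hkey : promotedValue β γ cp cm r δ μ W a ≤ β * W 0)
    (hmin : ∀ t, x ≤ t →
      promotedValue β γ cp cm r δ μ W (max x a) ≤ promotedValue β γ cp cm r δ μ W t)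
    (hxt : x ≤ t) :
    promotedValue β γ cp cm r δ μ W (max x a) ≤ unpromotedValue β γ cp W t := by
  have hunprom := monotone_unpromotedValue hβ hγ hq hcp hmono
  have hzero : unpromotedValue β γ cp W 0 = β * W 0 := by simp [unpromotedValue]
  rcases le_or_gt a t with hat | hta
  · have := antitone_promotedValue_sub_unpromotedValue (r := r) (δ := δ) (μ := μ) hβ hγ hcm1
      hmono hlip hat
    have := hunprom ha
    linarith [hmin t hxt]
  · rw [max_eq_right (hxt.trans hta.le)]
    linarith [hunprom (hx.trans hxt)]

end bellman

theorem cm_mul_le_reward {β γ cm r δ : ℝ} (hβ : β ∈ Set.Ioo 0 1) (hγ : γ ∈ Set.Ioo 0 1)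
    (hcm : 0 ≤ cm) (hδ : 0 ≤ δ) (hr : (1 - β) * cm * δ / ((1 - γ) * (1 - β * γ)) ≤ r) (j : ℕ) :
    cm * (δ / (1 - γ) * (1 - γ ^ j) - β * δ * ((1 - (β * γ) ^ j) / (1 - β * γ))) ≤ r := by
  -- the left side increases with `j` towards `(1 - β) c⁻ δ / ((1 - γ) (1 - βγ))`
  obtain ⟨hβ0, hβ1⟩ := hβ
  obtain ⟨hγ0, hγ1⟩ := hγ
  have h1γ : 0 < 1 - γ := by linarith
  have h1q : 0 < 1 - β * γ := by nlinarith
  have hβj : β ^ (j + 1) ≤ 1 := pow_le_one₀ hβ0.le hβ1.le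
  have hkey : (1 - γ ^ j) * (1 - β * γ) - β * (1 - γ) * (1 - (β * γ) ^ j)
      = 1 - β - γ ^ j * ((1 - β * γ) - β ^ (j + 1) * (1 - γ)) := by ring
  have hpos : 0 ≤ γ ^ j * ((1 - β * γ) - β ^ (j + 1) * (1 - γ)) :=
    mul_nonneg (pow_nonneg hγ0.le j) (by nlinarith)
  set q := β * γ
  clear_value q
  calc cm * (δ / (1 - γ) * (1 - γ ^ j) - β * δ * ((1 - q ^ j) / (1 - q)))
      = cm * δ * ((1 - γ ^ j) * (1 - q) - β * (1 - γ) * (1 - q ^ j)) / ((1 - γ) * (1 - q)) := by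
        field_simp
    _ ≤ (1 - β) * cm * δ / ((1 - γ) * (1 - q)) := by
        refine div_le_div_of_nonneg_right ?_ (by positivity)
        rw [hkey]
        nlinarith [mul_nonneg (mul_nonneg hcm hδ) hpos]
    _ ≤ r := hr

section promotedValueFn

variable {β γ cp cm r δ μ : ℝ} {s ξ : ℕ → ℝ} {N : ℕ}

theorem promotedValue_valueFn_le_of_le (hβ : 0 ≤ β) (hγ : 0 ≤ γ) (hq : β * γ ≠ 1)
    (hcm : 0 ≤ cm) (hs : StrictAnti s)
    (hξ : ∀ k, affinePiece (β * γ) cp cm s ξ (k + 1) (s k) = ξ k)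
    (hslope : 0 ≤ pieceSlope (β * γ) cp cm N) (hshift : ∀ k, γ * s (k + 1) + δ = s k) (hN : 0 < N)
    {a t : ℝ} (hNa : s N ≤ a) (ha0 : a ≤ s 0) (hat : a ≤ t) :
    promotedValue β γ cp cm r δ μ (valueFn (β * γ) cp cm s ξ N) a
      ≤ promotedValue β γ cp cm r δ μ (valueFn (β * γ) cp cm s ξ N) t := by
  obtain ⟨i, hi, h1, h2⟩ := exists_mem_Icc_of_le_of_le s hN hNa ha0
  have hsub := valueFn_add_pieceSlope_mul_le (mul_nonneg hβ hγ) hq hcm hs hξ hslope hi.le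
    (valueFn_shift_eq hs hξ hγ hshift hi.le h1 h2)
  have := promotedValue_add_pieceSlope_mul_le (r := r) (μ := μ) hβ hq hsub t
  have hpos := hslope.trans (pieceSlope_antitone (mul_nonneg hβ hγ) hq hcm hi)
  nlinarith [mul_nonneg hpos (sub_nonneg.2 hat)]

/-- On `[s (k + 1), s k]` the promoted value has slope `pieceSlope (k + 1)`, positive for `k < N`
and non-positive for `k = N`. -/
theorem promotedValue_valueFn_s_le (hβ : 0 ≤ β) (hγ : 0 ≤ γ) (hq : β * γ ≠ 1)
    (hcm : 0 ≤ cm) (hs : StrictAnti s)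
    (hξ : ∀ k, affinePiece (β * γ) cp cm s ξ (k + 1) (s k) = ξ k)
    (hslope : 0 ≤ pieceSlope (β * γ) cp cm N) (hslope' : pieceSlope (β * γ) cp cm (N + 1) ≤ 0)
    (hshift : ∀ k, γ * s (k + 1) + δ = s k) (hN : 0 < N) (t : ℝ) :
    promotedValue β γ cp cm r δ μ (valueFn (β * γ) cp cm s ξ N) (s N)
      ≤ promotedValue β γ cp cm r δ μ (valueFn (β * γ) cp cm s ξ N) t := by
  rcases le_total (s N) t with hNt | htN
  · exact promotedValue_valueFn_le_of_le hβ hγ hq hcm hs hξ hslope hshift hN le_rfl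
      (hs.antitone N.zero_le) hNt
  · have hsub := valueFn_add_pieceSlope_mul_le (mul_nonneg hβ hγ) hq hcm hs hξ hslope le_rfl
      (valueFn_shift_eq hs hξ hγ hshift le_rfl (hs.antitone N.le_succ) le_rfl)
    have := promotedValue_add_pieceSlope_mul_le (r := r) (μ := μ) hβ hq hsub t
    nlinarith [mul_nonneg_of_nonpos_of_nonpos hslope' (sub_nonpos.2 htN)]

theorem promotedValue_valueFn_max_le (hβ : 0 ≤ β) (hγ : 0 ≤ γ) (hq : β * γ ≠ 1)
    (hcm : 0 ≤ cm) (hs : StrictAnti s)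
    (hξ : ∀ k, affinePiece (β * γ) cp cm s ξ (k + 1) (s k) = ξ k)
    (hslope : 0 ≤ pieceSlope (β * γ) cp cm N) (hslope' : pieceSlope (β * γ) cp cm (N + 1) ≤ 0)
    (hshift : ∀ k, γ * s (k + 1) + δ = s k) (hN : 0 < N) {x t : ℝ} (hx0 : 0 ≤ x)
    (hx : x ≤ s 0) (hxt : x ≤ t) :
    promotedValue β γ cp cm r δ μ (valueFn (β * γ) cp cm s ξ N) (max x (max 0 (s N)))
      ≤ promotedValue β γ cp cm r δ μ (valueFn (β * γ) cp cm s ξ N) t := by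
  rcases le_total (s N) t with hNt | htN
  · exact promotedValue_valueFn_le_of_le hβ hγ hq hcm hs hξ hslope hshift hN
      (le_max_of_le_right (le_max_right _ _))
      (max_le hx (max_le (hx0.trans hx) (hs.antitone N.zero_le)))
      (max_le hxt (max_le (hx0.trans hxt) hNt))
  · rw [max_eq_right ((hx0.trans hxt).trans htN), max_eq_right (hxt.trans htN)]
    exact promotedValue_valueFn_s_le hβ hγ hq hcm hs hξ hslope hslope' hshift hN t

theorem promotedValue_zero_le_of_s_nonpos (hβ : β ∈ Set.Ioo 0 1) (hγ : γ ∈ Set.Ioo 0 1)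
    (hcm : 0 ≤ cm) (hδ : 0 ≤ δ) (hr : (1 - β) * cm * δ / ((1 - γ) * (1 - β * γ)) ≤ r)
    (hs : StrictAnti s)
    (hξ : ∀ k, affinePiece (β * γ) cp cm s ξ (k + 1) (s k) = ξ k)
    (hshift : ∀ k, γ * s (k + 1) + δ = s k) (hs0 : s 0 = μ) (hμ : 0 ≤ μ) (hN : 0 < N)
    (hsN : s N ≤ 0) :
    promotedValue β γ cp cm r δ μ (valueFn (β * γ) cp cm s ξ N) 0
      ≤ β * valueFn (β * γ) cp cm s ξ N 0 := by
  obtain ⟨hβ0, hβ1⟩ := hβ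
  obtain ⟨hγ0, hγ1⟩ := hγ
  have hq : β * γ ≠ 1 := by nlinarith
  obtain ⟨i, hi, h1, h2⟩ := exists_mem_Icc_of_le_of_le s hN hsN (hs0 ▸ hμ)
  have hW0 := valueFn_eq_affinePiece_succ hs hξ hi h1 h2
  have hWδ := valueFn_shift_eq hs hξ hγ0.le hshift hi.le h1 h2
  have hdiff := affinePiece_sub_affinePiece_succ hq hξ i (γ * 0 + δ)
  have hgap := pow_mul_sub_eq_of_shift hγ1.ne hshift i
  have hD : δ / (1 - γ) * (1 - γ) = δ := div_mul_cancel₀ δ (by linarith)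
  have hreward := cm_mul_le_reward ⟨hβ0, hβ1⟩ ⟨hγ0, hγ1⟩ hcm hδ hr (i + 1)
  have hβq : β * (β * γ) ^ i ≤ γ ^ i := by
    rw [mul_pow, ← mul_assoc, ← pow_succ']
    exact mul_le_of_le_one_left (pow_nonneg hγ0.le i) (pow_le_one₀ hβ0.le hβ1.le)
  have hsi : s i ≤ δ := by nlinarith [hshift i]
  have hprod := mul_nonneg (mul_nonneg (sub_nonneg.2 hβq) (sub_nonneg.2 hsi)) hcm
  rw [promotedValue, hWδ, hW0]
  rw [hs0] at hgap
  -- up to `hgap` and `hD`, the slack in `hreward` is exactly `hprod`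
  simp only [affinePiece, pieceSlope] at hdiff ⊢
  linear_combination β * hdiff + cm * hgap - cm * γ ^ i * hD + hreward + hprod

theorem promotedValue_s_le_of_s_pos (hβ : β ∈ Set.Ioo 0 1) (hγ : γ ∈ Set.Ioo 0 1)
    (hcm : 0 ≤ cm) (hδ : 0 ≤ δ) (hr : (1 - β) * cm * δ / ((1 - γ) * (1 - β * γ)) ≤ r)
    (hcm2 : (1 - β * γ) * cp ≤ cm) (hs : StrictAnti s)
    (hξ : ∀ k, affinePiece (β * γ) cp cm s ξ (k + 1) (s k) = ξ k)
    (hshift : ∀ k, γ * s (k + 1) + δ = s k) (hs0 : s 0 = μ) (hsD : s N < δ / (1 - γ))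
    (hsN : 0 < s N) :
    promotedValue β γ cp cm r δ μ (valueFn (β * γ) cp cm s ξ N) (s N)
      ≤ β * valueFn (β * γ) cp cm s ξ N 0 := by
  obtain ⟨hβ0, hβ1⟩ := hβ
  obtain ⟨hγ0, hγ1⟩ := hγ
  have hWT := valueFn_shift_eq (N := N) hs hξ hγ0.le hshift le_rfl (hs.antitone N.le_succ) le_rfl
  have hgap := pow_mul_sub_eq_of_shift hγ1.ne hshift N
  rw [hs0] at hgap
  have hD : δ / (1 - γ) * (1 - γ) = δ := div_mul_cancel₀ δ (by linarith)
  have hreward := cm_mul_le_reward ⟨hβ0, hβ1⟩ ⟨hγ0, hγ1⟩ hcm hδ hr N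
  set D := δ / (1 - γ)
  clear_value D
  -- the difference to bound is `A + e * C` with `e = D - s N ∈ [0, D]`; check `e = 0` and `e = D`
  set σ := (1 - (β * γ) ^ N) / (1 - β * γ)
  set A := cp * D * (1 - β) - r
  set C := cm * (1 - γ ^ N) - (1 - β) * cp - β * (1 - γ) * σ * cm
  have hA : A ≤ 0 := by
    have : cp * D * (1 - β) * ((1 - γ) * (1 - β * γ)) ≤ (1 - β) * cm * δ := by
      have h := mul_le_mul_of_nonneg_left hcm2 (mul_nonneg (sub_nonneg.2 hβ1.le) hδ)
      linear_combination h + (cp * (1 - β) * (1 - β * γ)) * hD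
    have := (le_div_iff₀ (mul_pos (by linarith) (by nlinarith))).2 this
    linarith
  have hAC : A + D * C ≤ 0 := by linear_combination hreward - (β * σ * cm) * hD
  have hE : promotedValue β γ cp cm r δ μ (valueFn (β * γ) cp cm s ξ N) (s N)
      - β * valueFn (β * γ) cp cm s ξ N 0 = A + (D - s N) * C := by
    rw [promotedValue, hWT, valueFn_of_le hs hsN.le]
    simp only [affinePiece, pieceSlope]
    linear_combination cm * hgap + (β * σ * cm) * hD
  have hD0 : 0 < D := by linarith
  have : D * (A + (D - s N) * C) ≤ 0 := by
    nlinarith [mul_nonneg hsN.le (neg_nonneg.2 hA),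
      mul_nonneg (sub_nonneg.2 hsD.le) (neg_nonneg.2 hAC)]
  linarith [(mul_nonpos_iff_pos_imp_nonpos.1 this).1 hD0]

theorem promotedValue_max_zero_s_le (hβ : β ∈ Set.Ioo 0 1) (hγ : γ ∈ Set.Ioo 0 1)
    (hcm : 0 ≤ cm) (hδ : 0 ≤ δ) (hr : (1 - β) * cm * δ / ((1 - γ) * (1 - β * γ)) ≤ r)
    (hcm2 : (1 - β * γ) * cp ≤ cm) (hs : StrictAnti s)
    (hξ : ∀ k, affinePiece (β * γ) cp cm s ξ (k + 1) (s k) = ξ k)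
    (hshift : ∀ k, γ * s (k + 1) + δ = s k) (hs0 : s 0 = μ) (hμD : μ < δ / (1 - γ))
    (hμ : 0 ≤ μ) (hN : 0 < N) :
    promotedValue β γ cp cm r δ μ (valueFn (β * γ) cp cm s ξ N) (max 0 (s N))
      ≤ β * valueFn (β * γ) cp cm s ξ N 0 := by
  rcases le_or_gt (s N) 0 with hsN | hsN
  · rw [max_eq_left hsN]
    exact promotedValue_zero_le_of_s_nonpos hβ hγ hcm hδ hr hs hξ hshift hs0 hμ hN hsN
  · rw [max_eq_right hsN.le]
    exact promotedValue_s_le_of_s_pos hβ hγ hcm hδ hr hcm2 hs hξ hshift hs0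
      (lt_div_of_shift hγ.1 hγ.2 hshift (hs0 ▸ hμD) N) hsN

end promotedValueFn

theorem stmt_3_general (β γ cplus cminus r δ μ : ℝ)
    (hβ : β ∈ Set.Ioo (0:ℝ) 1) (hγ : γ ∈ Set.Ioo (0:ℝ) 1)
    (hcm : 0 < cminus) (hcmcp : cminus < cplus)
    (hδ : 0 ≤ δ) (hμpos : 0 < μ)
    (hμsmall : μ < δ / (1 - γ))
    (hrbig : (1 - β) * cminus * δ / ((1 - γ) * (1 - β * γ)) ≤ r)
    (hcm1 : β * γ * cplus ≤ cminus)
    (hcm2 : (1 - β * γ) * cplus < cminus)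
    (s ξ : ℕ → ℝ)
    (hs0 : s 0 = μ)
    (hsrec : ∀ k : ℕ, s (k + 1) = (s k - δ) / γ)
    (hξrec : ∀ k : ℕ, ξ (k + 1) =
        (cplus - ((1 - (β * γ) ^ (k + 1)) / (1 - β * γ)) * cminus) * (s (k + 1) - s k) + ξ k)
    (W : ℝ → ℝ)
    (hW : ∀ x : ℝ, W x =
        (if x < s (bellK β γ cplus cminus - 1) then ξ (bellK β γ cplus cminus - 1) else 0)
        + ∑ k ∈ Finset.Icc 1 (bellK β γ cplus cminus - 1),
            (if s k ≤ x ∧ x < s (k - 1) then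
              (cplus - ((1 - (β * γ) ^ k) / (1 - β * γ)) * cminus) * (x - s k) + ξ k else 0)
        + (if s 0 ≤ x then cplus * (x - s 0) + ξ 0 else 0)) :
    ∀ x ∈ Set.Icc (0:ℝ) μ,
      IsLeast
        { v : ℝ | ∃ xt u : ℝ, x ≤ xt ∧ 0 ≤ u ∧ v = bellObj β γ cplus cminus r δ μ W xt u }
        (bellObj β γ cplus cminus r δ μ W
          (max x (max 0 (s (bellK β γ cplus cminus - 1))))
          (μ - max x (max 0 (s (bellK β γ cplus cminus - 1))))) := by
  rintro x ⟨hx0, hxμ⟩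
  set N := bellK β γ cplus cminus - 1
  obtain rfl : W = valueFn (β * γ) cplus cminus s ξ N := funext hW
  have hq0 : 0 < β * γ := mul_pos hβ.1 hγ.1
  have hq1 : β * γ < 1 := mul_lt_one_of_nonneg_of_lt_one_left hβ.1.le hβ.2 hγ.2.le
  have hK := one_lt_bellK hq0 hq1 hcm hcmcp hcm2
  have hN : 0 < N := by omega
  have hslope : 0 ≤ pieceSlope (β * γ) cplus cminus N :=
    ((pieceSlope_pos_iff_lt_bellK hq0 hq1 hcm hcm2 N).2 (by omega)).le
  have hslope' : pieceSlope (β * γ) cplus cminus (N + 1) ≤ 0 :=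
    not_lt.1 fun h => by have := (pieceSlope_pos_iff_lt_bellK hq0 hq1 hcm hcm2 _).1 h; omega
  have hshift := shift_succ_of_rec hγ.1.ne' hsrec
  have hs := strictAnti_of_shift hγ.1 hγ.2 hshift (hs0 ▸ hμsmall)
  have hξ : ∀ k, affinePiece (β * γ) cplus cminus s ξ (k + 1) (s k) = ξ k := fun k => by
    rw [affinePiece, pieceSlope, hξrec k]; ring
  have hmono := valueFn_monotone hq0.le hq1.ne hcm.le hs hξ hslope
  have hlip := fun a b => valueFn_le_add_mul_sub (a := a) (b := b) hq0.le hq1.ne hcm.le hs hξ hslope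
  have hmin := fun t => promotedValue_valueFn_max_le (r := r) (μ := μ) (t := t) hβ.1.le hγ.1.le
    hq1.ne hcm.le hs hξ hslope hslope' hshift hN hx0 (hs0 ▸ hxμ)
  refine isLeast_bellObj hcm.le (le_max_left _ _)
    (max_le hxμ (max_le hμpos.le (hs0 ▸ hs.antitone N.zero_le))) hmin fun t hxt => ?_
  refine promotedValue_max_le_unpromotedValue hβ.1.le hγ.1.le hq1.le (hcm.trans hcmcp).le hcm1
    hmono hlip hx0 (le_max_left _ _)
    (promotedValue_max_zero_s_le hβ hγ hcm.le hδ hrbig hcm2.le hs hξ hshift hs0 hμsmall hμpos.le hN)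
    hmin hxt

/-- Theorem 3.1 (agent's optimal strategy for a small threshold): with the
small-threshold piecewise-linear fixed point `W` and `x° := max{0, s_{K-1}}`, for every
`x ∈ [0,μ]` the Bellman infimum over `x̃ ≥ x`, `u ≥ 0` is attained at
`x̃ = max{x, x°}`, `u = μ - max{x, x°}` (pure gaming if `x ≥ x°`, a mixture of
improvement `x° - x` and gaming `μ - x°` if `x < x°`). -/
theorem stmt_3 (β γ cplus cminus r δ μ : ℝ)
    (hβ : β ∈ Set.Ioo (0:ℝ) 1) (hγ : γ ∈ Set.Ioo (0:ℝ) 1)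
    (hcm : 0 < cminus) (hcmcp : cminus < cplus)
    (hr : 0 < r) (hδ : 0 ≤ δ) (hμpos : 0 < μ)
    (hμsmall : μ < δ / (1 - γ))
    (hrbig : (1 - β) * cminus * δ / ((1 - γ) * (1 - β * γ)) ≤ r)
    (hcm1 : β * γ * cplus ≤ cminus)
    (hcm2 : (1 - β * γ) * cplus < cminus)
    (s ξ : ℕ → ℝ)
    (hs0 : s 0 = μ) (hξ0 : ξ 0 = cplus * μ - r / (1 - β))
    (hsrec : ∀ k : ℕ, s (k + 1) = (s k - δ) / γ)
    (hξrec : ∀ k : ℕ, ξ (k + 1) =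
        (cplus - ((1 - (β * γ) ^ (k + 1)) / (1 - β * γ)) * cminus) * (s (k + 1) - s k) + ξ k)
    (W : ℝ → ℝ)
    (hW : ∀ x : ℝ, W x =
        (if x < s (bellK β γ cplus cminus - 1) then ξ (bellK β γ cplus cminus - 1) else 0)
        + ∑ k ∈ Finset.Icc 1 (bellK β γ cplus cminus - 1),
            (if s k ≤ x ∧ x < s (k - 1) then
              (cplus - ((1 - (β * γ) ^ k) / (1 - β * γ)) * cminus) * (x - s k) + ξ k else 0)
        + (if s 0 ≤ x then cplus * (x - s 0) + ξ 0 else 0)) :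
    ∀ x ∈ Set.Icc (0:ℝ) μ,
      IsLeast
        { v : ℝ | ∃ xt u : ℝ, x ≤ xt ∧ 0 ≤ u ∧ v = bellObj β γ cplus cminus r δ μ W xt u }
        (bellObj β γ cplus cminus r δ μ W
          (max x (max 0 (s (bellK β γ cplus cminus - 1))))
          (μ - max x (max 0 (s (bellK β γ cplus cminus - 1))))) :=
  stmt_3_general β γ cplus cminus r δ μ hβ hγ hcm hcmcp hδ hμpos hμsmall hrbig hcm1 hcm2 s ξ hs0
    hsrec hξrec W hW
end

section
/- Assume δ/(1−γ) ≤ μ < (r + β·c⁺·δ) / ((1−βγ)·c⁺) and (1−βγ)·c⁺ < c⁻. Then the constant function W(x) ≡ G(μ) = [(1−βγ)·c⁺·μ − (r + β·c⁺·δ)]/(1−β) on [0,μ] satisfies the restricted two-level Bellman equation: for every x ∈ [0,μ], G(μ) = inf over x̃ ∈ [x,μ] and u ≥ 0 of (1−βγ)·c⁺·x̃ + c⁻·u − (r+β·c⁺·δ)·𝟙{x̃+u ≥ μ} + β·G(μ). -/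
/-- The objective of the (restricted) two-level Bellman equation. -/
noncomputable def rbellObj (β γ cplus cminus r δ μ : ℝ) (W : ℝ → ℝ) (xt u : ℝ) : ℝ :=
  (1 - β * γ) * cplus * xt + cminus * u
    - (r + β * cplus * δ) * (if μ ≤ xt + u then 1 else 0)
    + β * W (γ * xt + δ * (if μ ≤ xt + u then 1 else 0))

/-- Right-hand side of the restricted two-level Bellman equation:
infimum over `x̃ ∈ [x,μ]` and `u ≥ 0` of the Bellman objective. -/
noncomputable def rbellRHS (β γ cplus cminus r δ μ : ℝ) (W : ℝ → ℝ) (x : ℝ) : ℝ :=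
  sInf { v : ℝ | ∃ xt u : ℝ, x ≤ xt ∧ xt ≤ μ ∧ 0 ≤ u ∧
    v = rbellObj β γ cplus cminus r δ μ W xt u }

/-- Claim C.2 (Case A of Theorem 3.2): when `δ/(1-γ) ≤ μ < (r + βc⁺δ)/((1-βγ)c⁺)` and
`(1-βγ)c⁺ < c⁻`, the constant function `W ≡ G(μ) = ((1-βγ)c⁺μ - (r+βc⁺δ))/(1-β)`
satisfies the restricted two-level Bellman equation on `[0,μ]`. -/
theorem stmt_4 (β γ cplus cminus r δ μ : ℝ)
    (hβ : β ∈ Set.Ioo (0:ℝ) 1) (hγ : γ ∈ Set.Ioo (0:ℝ) 1)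
    (hcm : 0 < cminus) (hcmcp : cminus < cplus)
    (hr : 0 < r) (hδ : 0 ≤ δ) (hμpos : 0 < μ)
    (hglob : (1 - β * γ) * cplus < cminus)
    (hμlo : δ / (1 - γ) ≤ μ)
    (hμhi : μ < (r + β * cplus * δ) / ((1 - β * γ) * cplus)) :
    ∀ x ∈ Set.Icc (0:ℝ) μ,
      ((1 - β * γ) * cplus * μ - (r + β * cplus * δ)) / (1 - β)
        = rbellRHS β γ cplus cminus r δ μ
            (fun _ => ((1 - β * γ) * cplus * μ - (r + β * cplus * δ)) / (1 - β)) x := by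
  obtain ⟨hβ0, hβ1⟩ := hβ
  obtain ⟨hγ0, hγ1⟩ := hγ
  intro x hx
  obtain ⟨hx0, hxμ⟩ := hx
  set G : ℝ := ((1 - β * γ) * cplus * μ - (r + β * cplus * δ)) / (1 - β) with hG
  have hbg : β * γ < 1 := by nlinarith [mul_lt_of_lt_one_right hβ0 hγ1]
  have hA : 0 < (1 - β * γ) * cplus := mul_pos (by linarith) (by linarith)
  have h1β : 0 < 1 - β := by linarith
  have hGeq : (1 - β) * G = (1 - β * γ) * cplus * μ - (r + β * cplus * δ) := by
    rw [hG]; field_simp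
  have hRA : μ * ((1 - β * γ) * cplus) < r + β * cplus * δ := (lt_div_iff₀ hA).mp hμhi
  have hlb : ∀ v ∈ { v : ℝ | ∃ xt u : ℝ, x ≤ xt ∧ xt ≤ μ ∧ 0 ≤ u ∧
      v = rbellObj β γ cplus cminus r δ μ (fun _ => G) xt u }, G ≤ v := by
    rintro v ⟨xt, u, hxxt, hxtμ, hu, rfl⟩
    have hxt0 : 0 ≤ xt := le_trans hx0 hxxt
    by_cases hind : μ ≤ xt + u
    · simp only [rbellObj, if_pos hind]
      nlinarith
    · simp only [rbellObj, if_neg hind]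
      nlinarith
  refine le_antisymm (le_csInf ⟨_, ⟨μ, 0, hxμ, le_refl μ, le_refl 0, rfl⟩⟩ hlb) ?_
  have hmem : G ∈ { v : ℝ | ∃ xt u : ℝ, x ≤ xt ∧ xt ≤ μ ∧ 0 ≤ u ∧
      v = rbellObj β γ cplus cminus r δ μ (fun _ => G) xt u } := by
    refine ⟨μ, 0, hxμ, le_refl μ, le_refl 0, ?_⟩
    simp only [rbellObj, add_zero, if_pos (le_refl μ), mul_one, mul_zero]
    linarith [hGeq]
  exact csInf_le ⟨G, hlb⟩ hmem
end

section
/- Assume max{ δ/(1−γ), (r+β·c⁺·δ)/((1−βγ)·c⁺) } ≤ μ < r·(c⁻ − (1−β)·c⁺)/(β·(1−γ)·c⁺·c⁻) + δ/(1−γ), and (1−βγ)·c⁺ < c⁻. Then the function W : [0,μ] → ℝ given by W(x) = c⁺·x for 0 ≤ x < G(μ)/c⁺ and W(x) = G(μ) for G(μ)/c⁺ ≤ x ≤ μ satisfies the restricted two-level Bellman equation on [0,μ]. -/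
set_option maxHeartbeats 1000000


/-- Claim C.3 (Case B of Theorem 3.2): when
`max{δ/(1-γ), (r+βc⁺δ)/((1-βγ)c⁺)} ≤ μ < r(c⁻-(1-β)c⁺)/(β(1-γ)c⁺c⁻) + δ/(1-γ)` and
`(1-βγ)c⁺ < c⁻`, the function equal to `c⁺x` below `G(μ)/c⁺` and `G(μ)` above satisfies
the restricted two-level Bellman equation on `[0,μ]`. -/
theorem stmt_5 (β γ cplus cminus r δ μ : ℝ)
    (hβ : β ∈ Set.Ioo (0:ℝ) 1) (hγ : γ ∈ Set.Ioo (0:ℝ) 1)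
    (hcm : 0 < cminus) (hcmcp : cminus < cplus)
    (hr : 0 < r) (hδ : 0 ≤ δ) (hμpos : 0 < μ)
    (hglob : (1 - β * γ) * cplus < cminus)
    (hμlo : max (δ / (1 - γ)) ((r + β * cplus * δ) / ((1 - β * γ) * cplus)) ≤ μ)
    (hμhi : μ < r * (cminus - (1 - β) * cplus) / (β * (1 - γ) * cplus * cminus) + δ / (1 - γ))
    (W : ℝ → ℝ)
    (hW : ∀ x : ℝ, W x =
        if x < (((1 - β * γ) * cplus * μ - (r + β * cplus * δ)) / (1 - β)) / cplus
        then cplus * x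
        else ((1 - β * γ) * cplus * μ - (r + β * cplus * δ)) / (1 - β)) :
    ∀ x ∈ Set.Icc (0:ℝ) μ, W x = rbellRHS β γ cplus cminus r δ μ W x := by
  obtain ⟨hβ0, hβ1⟩ := hβ
  obtain ⟨hγ0, hγ1⟩ := hγ
  have hcp : (0:ℝ) < cplus := hcm.trans hcmcp
  have h1β : (0:ℝ) < 1 - β := by linarith
  have h1γ : (0:ℝ) < 1 - γ := by linarith
  have h1βγ : (0:ℝ) < 1 - β * γ := by nlinarith
  set G : ℝ := ((1 - β * γ) * cplus * μ - (r + β * cplus * δ)) / (1 - β) with hG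
  have hGdef : G * (1 - β) = (1 - β * γ) * cplus * μ - (r + β * cplus * δ) := by
    rw [hG]; field_simp
  have hμlo1 : δ ≤ μ * (1 - γ) := by
    have h := le_trans (le_max_left _ _) hμlo
    exact (div_le_iff₀ h1γ).mp h
  have hμlo2 : r + β * cplus * δ ≤ μ * ((1 - β * γ) * cplus) := by
    have h := le_trans (le_max_right _ _) hμlo
    exact (div_le_iff₀ (by positivity)).mp h
  have hG0 : 0 ≤ G := by
    rw [hG]
    apply div_nonneg _ h1β.le
    nlinarith [hμlo2]
  have hμhi' : β * (1 - γ) * cplus * cminus * μ <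
      r * (cminus - (1 - β) * cplus) + β * cplus * cminus * δ := by
    have h1 : r * (cminus - (1 - β) * cplus) / (β * (1 - γ) * cplus * cminus) + δ / (1 - γ)
        = (r * (cminus - (1 - β) * cplus) + β * cplus * cminus * δ)
          / (β * (1 - γ) * cplus * cminus) := by
      field_simp
    rw [h1, lt_div_iff₀ (by positivity)] at hμhi
    nlinarith [hμhi]
  have hr1 : (1 - γ) * cplus * μ < r + cplus * δ := by
    nlinarith [hμhi', mul_pos hβ0 hcm,
      mul_nonneg (mul_nonneg hr.le h1β.le) (by linarith : (0:ℝ) ≤ cplus - cminus)]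
  have hK1 : G ≤ cplus * (γ * μ + δ) := by
    rw [hG, div_le_iff₀ h1β]
    nlinarith [hr1]
  have hK2 : cminus * G < cplus * cminus * μ - r * cplus := by
    have e : cminus * G = cminus * ((1 - β * γ) * cplus * μ - (r + β * cplus * δ)) / (1 - β) := by
      rw [hG]; ring
    rw [e, div_lt_iff₀ h1β]
    nlinarith [hμhi']
  have hWmin : ∀ y : ℝ, W y = min (cplus * y) G := by
    intro y
    rw [hW y]
    split_ifs with h
    · have h' : cplus * y ≤ G := by
        have h2 := (lt_div_iff₀ hcp).mp h
        linarith
      rw [min_eq_left h']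
    · push_neg at h
      have h' : G ≤ cplus * y := by
        have h2 := (div_le_iff₀ hcp).mp h
        linarith
      rw [min_eq_right h']
  intro x hx
  obtain ⟨hx0, hxμ⟩ := hx
  rw [hWmin x]
  simp only [rbellRHS]
  have hlow : ∀ v ∈ { v : ℝ | ∃ xt u : ℝ, x ≤ xt ∧ xt ≤ μ ∧ 0 ≤ u ∧
      v = rbellObj β γ cplus cminus r δ μ W xt u }, min (cplus * x) G ≤ v := by
    rintro v ⟨xt, u, hxxt, hxtμ, hu, rfl⟩
    have hxt0 : 0 ≤ xt := hx0.trans hxxt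
    simp only [rbellObj]
    rw [hWmin]
    by_cases hind : μ ≤ xt + u
    · rw [if_pos hind]
      rcases le_total G (cplus * (γ * xt + δ * 1)) with h | h
      · rw [min_eq_right h]
        refine le_trans (min_le_right _ _) ?_
        nlinarith [hGdef,
          mul_nonneg (by linarith : (0:ℝ) ≤ cminus - (1 - β * γ) * cplus)
            (by linarith : (0:ℝ) ≤ μ - xt),
          mul_nonneg hcm.le (by linarith : (0:ℝ) ≤ u - (μ - xt))]
      · rw [min_eq_left h]
        rcases le_total (cplus * x) G with hxG | hGx
        · rw [min_eq_left hxG]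
          nlinarith [hK2, mul_le_mul_of_nonneg_left hxG hcm.le,
            mul_nonneg (mul_nonneg hcp.le hcm.le) (by linarith : (0:ℝ) ≤ xt + u - μ),
            mul_nonneg (mul_nonneg hcp.le (by linarith : (0:ℝ) ≤ cplus - cminus))
              (by linarith : (0:ℝ) ≤ xt - x), hcp]
        · rw [min_eq_right hGx]
          nlinarith [hK2, mul_le_mul_of_nonneg_left hGx (by linarith : (0:ℝ) ≤ cplus - cminus),
            mul_nonneg (mul_nonneg hcp.le hcm.le) (by linarith : (0:ℝ) ≤ xt + u - μ),
            mul_nonneg (mul_nonneg hcp.le (by linarith : (0:ℝ) ≤ cplus - cminus))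
              (by linarith : (0:ℝ) ≤ xt - x), hcp]
    · rw [if_neg hind]
      push_neg at hind
      rcases le_total (cplus * (γ * xt + δ * 0)) G with h | h
      · rw [min_eq_left h]
        refine le_trans (min_le_left _ _) ?_
        nlinarith [mul_nonneg hcm.le hu, mul_le_mul_of_nonneg_left hxxt hcp.le]
      · rw [min_eq_right h]
        refine le_trans (min_le_right _ _) ?_
        nlinarith [mul_nonneg hcm.le hu,
          mul_nonneg (mul_nonneg hβ0.le h1γ.le) hG0,
          mul_nonneg h1βγ.le
            (by nlinarith [h, mul_nonneg (mul_nonneg h1γ.le hcp.le) hxt0] :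
              (0:ℝ) ≤ cplus * xt - G)]
  have hmem : min (cplus * x) G ∈ { v : ℝ | ∃ xt u : ℝ, x ≤ xt ∧ xt ≤ μ ∧ 0 ≤ u ∧
      v = rbellObj β γ cplus cminus r δ μ W xt u } := by
    rcases lt_or_ge (cplus * x) G with hlt | hge
    · have hxμ' : x < μ := by
        have h2 : cplus * x < cplus * μ :=
          lt_of_lt_of_le hlt (hK1.trans (by nlinarith [mul_le_mul_of_nonneg_left hμlo1 hcp.le]))
        exact lt_of_mul_lt_mul_left h2 hcp.le
      refine ⟨x, 0, le_refl x, hxμ, le_refl 0, ?_⟩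
      rw [min_eq_left hlt.le]
      simp only [rbellObj]
      rw [if_neg (not_le.mpr (by linarith : x + 0 < μ))]
      rw [hWmin, min_eq_left
        (by nlinarith [hlt, mul_nonneg (mul_nonneg h1γ.le hcp.le) hx0] :
          cplus * (γ * x + δ * 0) ≤ G)]
      ring
    · refine ⟨μ, 0, hxμ, le_refl μ, le_refl 0, ?_⟩
      rw [min_eq_right hge]
      simp only [rbellObj]
      rw [if_pos (by linarith : μ ≤ μ + 0)]
      rw [hWmin, min_eq_right (by nlinarith [hK1] : G ≤ cplus * (γ * μ + δ * 1))]
      linarith [hGdef]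
  exact le_antisymm
    (le_csInf ⟨_, μ, 0, hxμ, le_refl μ, le_refl 0, rfl⟩ hlow)
    (csInf_le ⟨_, fun v hv => hlow v hv⟩ hmem)
end

section
/- Let β, γ ∈ (0,1), and let c⁺, c⁻, r, δ, μ be real numbers. Define sequences (s_k) and (ξ_k) by s₀ = μ, ξ₀ = c⁺·μ − r/(1−β), s_{k+1} = (s_k − δ)/γ, and ξ_{k+1} = ( c⁺ − ((1−β^{k+1}γ^{k+1})/(1−βγ))·c⁻ )·(s_{k+1} − s_k) + ξ_k for all k ≥ 0. Then for every k ≥ 0: β·ξ_k + [ (1−βγ)·c⁺ − c⁻ ]·s_{k+1} + c⁻·μ − r − β·c⁺·δ = ξ_{k+1}. -/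
/-- The algebraic identity (Equation "identity") from the proof of Claim B.1 /
Theorem 3.1: with `s₀ = μ`, `ξ₀ = c⁺μ - r/(1-β)`, `s_{k+1} = (s_k - δ)/γ` and
`ξ_{k+1} = (c⁺ - ((1-β^{k+1}γ^{k+1})/(1-βγ))c⁻)(s_{k+1} - s_k) + ξ_k`, one has
`β·ξ_k + [(1-βγ)c⁺ - c⁻]·s_{k+1} + c⁻μ - r - βc⁺δ = ξ_{k+1}` for every `k ≥ 0`. -/
theorem stmt_8 (β γ cplus cminus r δ μ : ℝ)
    (hβ : β ∈ Set.Ioo (0:ℝ) 1) (hγ : γ ∈ Set.Ioo (0:ℝ) 1)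
    (s ξ : ℕ → ℝ)
    (hs0 : s 0 = μ) (hξ0 : ξ 0 = cplus * μ - r / (1 - β))
    (hsrec : ∀ k : ℕ, s (k + 1) = (s k - δ) / γ)
    (hξrec : ∀ k : ℕ, ξ (k + 1) =
        (cplus - ((1 - (β * γ) ^ (k + 1)) / (1 - β * γ)) * cminus) * (s (k + 1) - s k) + ξ k) :
    ∀ k : ℕ,
      β * ξ k + ((1 - β * γ) * cplus - cminus) * s (k + 1) + cminus * μ - r - β * cplus * δ
        = ξ (k + 1) := by
  obtain ⟨hβ0, hβ1⟩ := hβ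
  obtain ⟨hγ0, hγ1⟩ := hγ
  have hγ' : γ ≠ 0 := ne_of_gt hγ0
  have hβ' : (1 : ℝ) - β ≠ 0 := by nlinarith
  have hβγ : (1 : ℝ) - β * γ ≠ 0 := by nlinarith
  have hne : γ * (1 - β * γ) ≠ 0 := mul_ne_zero hγ' hβγ
  have hS : ∀ k : ℕ, γ * s (k + 1) = s k - δ := by
    intro k; rw [hsrec k]; field_simp
  have hX : ∀ k : ℕ, (1 - β * γ) * ξ (k + 1) =
      ((1 - β * γ) * cplus - (1 - (β * γ) ^ (k + 1)) * cminus) * (s (k + 1) - s k)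
        + (1 - β * γ) * ξ k := by
    intro k; rw [hξrec k]; field_simp
  intro k
  induction k with
  | zero =>
      have key : (γ * (1 - β * γ) * (1 - β)) *
          (β * ξ 0 + ((1 - β * γ) * cplus - cminus) * s 1 + cminus * μ - r - β * cplus * δ)
          = (γ * (1 - β * γ) * (1 - β)) * ξ 1 := by
        have e0 : (1 - β) * ξ 0 = (1 - β) * (cplus * μ) - r := by
          rw [hξ0]; field_simp
        linear_combination (-(γ * (1 - β * γ) * (1 - β))) * e0 + (-(γ * (1 - β))) * hX 0
          + (-(β * γ * (1 - β) * (1 - β * γ) * cplus)) * hS 0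
          + (γ * (1 - β) * (1 - β * γ) * ((1 - β) * cplus - cminus)) * hs0
      have hne' : γ * (1 - β * γ) * (1 - β) ≠ 0 := mul_ne_zero hne hβ'
      exact mul_left_cancel₀ hne' key
  | succ n ih =>
      have key : (γ * (1 - β * γ)) *
          (β * ξ (n + 1) + ((1 - β * γ) * cplus - cminus) * s (n + 2) + cminus * μ - r
            - β * cplus * δ) = (γ * (1 - β * γ)) * ξ (n + 2) := by
        linear_combination (γ * (1 - β * γ)) * ih + (β * γ) * hX n - γ * hX (n + 1)
          + (β * γ * ((1 - β * γ) * cplus - (1 - (β * γ) ^ (n + 1)) * cminus)) * (hS n - hS (n + 1))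
      exact mul_left_cancel₀ hne key
end

section
/- Let β, γ ∈ (0,1), and let c⁺, r, δ, μ be real numbers and c⁻ ≠ 0. Define s₀ = ξ₀ = 0 and, for k ≥ 1, s_k = [ (1−γ)·(c⁻·μ − r) − (1−γ^{k−1})·c⁻·δ ] / ( γ^{k−1}·(1−γ)·c⁻ ) and ξ_k = ( c⁺ − ((1−β^{k−1}γ^{k−1})/(1−βγ))·c⁻ )·(s_k − s_{k−1}) + ξ_{k−1}. Then for every k ≥ 1: β·ξ_k + [ (1−βγ)·c⁺ − c⁻ ]·s_{k+1} + c⁻·μ − r − β·c⁺·δ = ξ_{k+1}. -/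
/-- The algebraic identity (Equation "identity-second") from the proof of Claim C.4
(Case C of Theorem 3.2): with `s₀ = ξ₀ = 0` and, for `k ≥ 1`,
`s_k = ((1-γ)(c⁻μ - r) - (1-γ^{k-1})c⁻δ)/(γ^{k-1}(1-γ)c⁻)` and
`ξ_k = (c⁺ - ((1-β^{k-1}γ^{k-1})/(1-βγ))c⁻)(s_k - s_{k-1}) + ξ_{k-1}`, one has
`β·ξ_k + [(1-βγ)c⁺ - c⁻]·s_{k+1} + c⁻μ - r - βc⁺δ = ξ_{k+1}` for every `k ≥ 1`. -/
theorem stmt_9 (β γ cplus cminus r δ μ : ℝ)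
    (hβ : β ∈ Set.Ioo (0:ℝ) 1) (hγ : γ ∈ Set.Ioo (0:ℝ) 1)
    (hcm : cminus ≠ 0)
    (s ξ : ℕ → ℝ)
    (hs0 : s 0 = 0) (hξ0 : ξ 0 = 0)
    (hsrec : ∀ k : ℕ, s (k + 1) =
        ((1 - γ) * (cminus * μ - r) - (1 - γ ^ k) * cminus * δ) / (γ ^ k * (1 - γ) * cminus))
    (hξrec : ∀ k : ℕ, ξ (k + 1) =
        (cplus - ((1 - (β * γ) ^ k) / (1 - β * γ)) * cminus) * (s (k + 1) - s k) + ξ k) :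
    ∀ k : ℕ, 1 ≤ k →
      β * ξ k + ((1 - β * γ) * cplus - cminus) * s (k + 1) + cminus * μ - r - β * cplus * δ
        = ξ (k + 1) := by
  obtain ⟨hβ0, hβ1⟩ := hβ
  obtain ⟨hγ0, hγ1⟩ := hγ
  have hγne : γ ≠ 0 := ne_of_gt hγ0
  have hγ1ne : (1 - γ) ≠ 0 := by nlinarith
  have hβγ : (1 - β * γ) ≠ 0 := by nlinarith
  -- retention relation γ s_{m+2} + δ = s_{m+1}
  have hret : ∀ m : ℕ, γ * s (m + 2) + δ = s (m + 1) := by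
    intro m
    rw [hsrec (m + 1), hsrec m]
    have hpm : γ ^ m ≠ 0 := pow_ne_zero _ hγne
    field_simp
    ring
  intro k hk
  induction k, hk using Nat.le_induction with
  | base =>
    have h1 := hsrec 0
    have h2 := hsrec 1
    have h3 := hξrec 0
    have h4 := hξrec 1
    simp [hs0, hξ0, pow_zero, pow_one] at h1 h2 h3 h4
    rw [h4, h3, h1, h2]
    field_simp
    ring
  | succ n hn ih =>
    obtain ⟨m, rfl⟩ : ∃ m, n = m + 1 := ⟨n - 1, by omega⟩
    have hd : s (m + 2) - s (m + 1) = γ * (s (m + 3) - s (m + 2)) := by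
      have h1 := hret m
      have h2 := hret (m + 1)
      linarith
    have hc : β * γ * (cplus - ((1 - (β * γ) ^ (m + 1)) / (1 - β * γ)) * cminus)
        + ((1 - β * γ) * cplus - cminus)
        = cplus - ((1 - (β * γ) ^ (m + 2)) / (1 - β * γ)) * cminus := by
      field_simp
      ring
    linear_combination β * hξrec (m + 1) - hξrec (m + 2) + ih
      + (β * (cplus - ((1 - (β * γ) ^ (m + 1)) / (1 - β * γ)) * cminus)) * hd
      + (s (m + 3) - s (m + 2)) * hc
end

section
/- Let β, γ ∈ (0,1), r > 0, c⁺ > 0, let L ≥ 3 and K be integers with 1 ≤ K ≤ L−2, and let μ > r / ( (1−β)·(1−γ)²·c⁺ ). Then (r·L − c⁺·(1−γ)·μ) / (1−β) < r·( Σ_{t=0}^{K−1} β^t·(L−t−1) + (L−K−1)·β^K/(1−β) ) − c⁺·(1−γ)·γ·μ / (1−β). -/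
lemma key_sum (β L : ℝ) (hβ : (1:ℝ) - β ≠ 0) (K : ℕ) :
    (∑ t ∈ Finset.range K, β ^ t * (L - t - 1)) + (L - K - 1) * β ^ K / (1 - β)
      = L / (1 - β) - (1 - β ^ (K + 1)) / (1 - β) ^ 2 := by
  induction K with
  | zero =>
    simp only [Finset.range_zero, Finset.sum_empty, Nat.cast_zero, pow_zero, pow_one]
    field_simp
    ring
  | succ n ih =>
    rw [Finset.sum_range_succ]
    push_cast
    have hsum : (∑ t ∈ Finset.range n, β ^ t * (L - t - 1))
        = L / (1 - β) - (1 - β ^ (n + 1)) / (1 - β) ^ 2 - (L - n - 1) * β ^ n / (1 - β) := by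
      linarith [ih]
    rw [hsum]
    field_simp
    ring

/-- The utility-comparison inequality underlying Theorem 4.1 (infeasibility without the
leg-up effect): for `β, γ ∈ (0,1)`, `r, c⁺ > 0`, integers `L ≥ 3`, `1 ≤ K ≤ L-2`, and
`μ > r/((1-β)(1-γ)²c⁺)`, the utility of maintaining the top level forever is strictly
less than the lower bound on the utility of the lazy alternative strategy. -/
theorem stmt_12 (β γ r cplus : ℝ) (L K : ℕ)
    (hβ : β ∈ Set.Ioo (0:ℝ) 1) (hγ : γ ∈ Set.Ioo (0:ℝ) 1)
    (hr : 0 < r) (hcp : 0 < cplus)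
    (hL : 3 ≤ L) (hK1 : 1 ≤ K) (hK2 : K ≤ L - 2)
    (μ : ℝ) (hμ : r / ((1 - β) * (1 - γ) ^ 2 * cplus) < μ) :
    (r * L - cplus * (1 - γ) * μ) / (1 - β)
      < r * ((∑ t ∈ Finset.range K, β ^ t * ((L : ℝ) - t - 1))
            + ((L : ℝ) - K - 1) * β ^ K / (1 - β))
        - cplus * (1 - γ) * γ * μ / (1 - β) := by
  obtain ⟨hβ0, hβ1⟩ := hβ
  obtain ⟨hγ0, hγ1⟩ := hγ
  have h1β : (0:ℝ) < 1 - β := by linarith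
  have h1γ : (0:ℝ) < 1 - γ := by linarith
  have hne : (1:ℝ) - β ≠ 0 := ne_of_gt h1β
  rw [key_sum β (L:ℝ) hne K]
  have hμ' : r < μ * ((1 - β) * (1 - γ) ^ 2 * cplus) := by
    have hpos : (0:ℝ) < (1 - β) * (1 - γ) ^ 2 * cplus := by positivity
    calc r = r / ((1 - β) * (1 - γ) ^ 2 * cplus) * ((1 - β) * (1 - γ) ^ 2 * cplus) := by
            field_simp
      _ < μ * ((1 - β) * (1 - γ) ^ 2 * cplus) := mul_lt_mul_of_pos_right hμ hpos
  have hβK : (0:ℝ) < β ^ (K + 1) := by positivity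
  have h2 : (0:ℝ) < (1 - β) ^ 2 := by positivity
  have goal' : r * (1 - β ^ (K + 1)) / (1 - β) ^ 2 < cplus * (1 - γ) ^ 2 * μ / (1 - β) := by
    rw [div_lt_div_iff₀ h2 h1β]
    nlinarith [mul_pos hr hβK]
  have heq1 : cplus * (1 - γ) * μ / (1 - β) - cplus * (1 - γ) * γ * μ / (1 - β)
      = cplus * (1 - γ) ^ 2 * μ / (1 - β) := by
    field_simp
  have heq2 : r * ((L:ℝ) / (1 - β) - (1 - β ^ (K + 1)) / (1 - β) ^ 2)
      = r * L / (1 - β) - r * (1 - β ^ (K + 1)) / (1 - β) ^ 2 := by ring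
  have heq3 : (r * (L:ℝ) - cplus * (1 - γ) * μ) / (1 - β)
      = r * L / (1 - β) - cplus * (1 - γ) * μ / (1 - β) := by ring
  rw [heq2, heq3]
  linarith
end
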